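/- arXiv:2303.15981 — 2 statements merged into one kernel-verified Lean document; each statement's English description precedes it below -/
import Mathlib

section
/- If a topological space X is super-refinable, then in every degree n its Čech homology Ȟ_n(X,ℤ) is isomorphic to its discrete homology 𝓗_n(X). -/
/-!
Let `P ≪ O` be a super-refinement. Choosing a point in each member of `P` sends nerve chains of
`P` to `O`-fine discrete chains: the members of a nerve simplex share a point `x`, so the chosen
points all lie in a parent of `x`. Sending each point to a parent sends `P`-fine chains to nerve
chains of `O`: the parents of the vertices of a `P`-tiny simplex all contain its first vertex.
Different choices of these vertex maps are contiguous, and so are the composites of the two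
constructions and the refinement maps; contiguous vertex maps are chain homotopic through the
prism operator. On the inverse limits over all covers the two constructions therefore induce
mutually inverse isomorphisms.
-/

set_option linter.unusedSectionVars false

/-- Discrete chains with `m` vertices: the free `ℤ`-module on ordered `m`-tuples of points. -/
abbrev DChain (α : Type*) (m : ℕ) := (Fin m → α) →₀ ℤ

/-- The `i`-th face operator on discrete chains, deleting the `i`-th vertex. -/
noncomputable def dface {α : Type*} {m : ℕ} (i : Fin (m + 1)) :
    DChain α (m + 1) →ₗ[ℤ] DChain α m :=
  Finsupp.lmapDomain ℤ ℤ (fun σ => σ ∘ i.succAbove)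

/-- The simplicial boundary operator on discrete chains:
`∂[x₀,…,xₙ] = ∑ i, (-1)^i [x₀,…,x̂ᵢ,…,xₙ]`. -/
noncomputable def dbd {α : Type*} {m : ℕ} : DChain α (m + 1) →ₗ[ℤ] DChain α m :=
  ∑ i : Fin (m + 1), ((-1 : ℤ) ^ (i : ℕ)) • dface i

/-- The chain map induced by a map on vertices. -/
noncomputable def vmap {α β : Type*} (f : α → β) {m : ℕ} : DChain α m →ₗ[ℤ] DChain β m :=
  Finsupp.lmapDomain ℤ ℤ (fun σ => f ∘ σ)

/-- The support of a discrete chain: the set of vertices appearing in its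
cancellation-free expression. -/
def chainSupp {α : Type*} {m : ℕ} (c : DChain α m) : Set α :=
  ⋃ σ ∈ c.support, Set.range σ

/-- An open cover of a topological space. -/
def IsOpenCover {X : Type*} [TopologicalSpace X] (O : Set (Set X)) : Prop :=
  (∀ U ∈ O, IsOpen U) ∧ ⋃₀ O = Set.univ

/-- `O'` refines `O`: every element of `O'` is contained in some element of `O`. -/
def Refines {X : Type*} (O' O : Set (Set X)) : Prop :=
  ∀ U ∈ O', ∃ V ∈ O, U ⊆ V

/-- `O'` is a super-refinement of `O` (written `O' ≪ O`) if every point `x` has a *parent*: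
an element of `O` containing every member of `O'` that contains `x`. -/
def SuperRefines {X : Type*} (O' O : Set (Set X)) : Prop :=
  ∀ x : X, ∃ U ∈ O, ∀ V ∈ O', x ∈ V → V ⊆ U

/-- A subset is `O`-tiny if it is contained in a single element of `O`. -/
def Tiny {X : Type*} (O : Set (Set X)) (A : Set X) : Prop :=
  ∃ U ∈ O, A ⊆ U

/-- A discrete chain is `O`-fine if each of its simplices is `O`-tiny. -/
def FineChain {X : Type*} (O : Set (Set X)) {m : ℕ} (c : DChain X m) : Prop :=
  ∀ σ ∈ c.support, Tiny O (Set.range σ)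

/-- A chain of tuples of sets is a nerve chain of the cover `O` if each of its simplices is a
tuple of elements of `O` with nonempty intersection. -/
def NerveChain {X : Type*} (O : Set (Set X)) {m : ℕ} (c : DChain (Set X) m) : Prop :=
  ∀ τ ∈ c.support, (∀ i, τ i ∈ O) ∧ (⋂ i, τ i).Nonempty

section Lemmas

variable {α β : Type*} {X : Type*}

lemma nerveChain_zero {X : Type*} (O : Set (Set X)) {m : ℕ} :
    NerveChain O (0 : DChain (Set X) m) := by
  intro τ hτ
  simp at hτ

lemma nerveChain_add {X : Type*} (O : Set (Set X)) {m : ℕ} {c d : DChain (Set X) m}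
    (hc : NerveChain O c) (hd : NerveChain O d) : NerveChain O (c + d) := by
  classical
  intro τ hτ
  rcases Finset.mem_union.1 (Finsupp.support_add hτ) with h | h
  · exact hc τ h
  · exact hd τ h

lemma nerveChain_neg {X : Type*} (O : Set (Set X)) {m : ℕ} {c : DChain (Set X) m}
    (hc : NerveChain O c) : NerveChain O (-c) := by
  intro τ hτ
  rw [Finsupp.support_neg] at hτ
  exact hc τ hτ

lemma vmap_face (f : α → β) {m : ℕ} (i : Fin (m + 1)) (c : DChain α (m + 1)) :
    dface i (vmap f c) = vmap f (dface i c) := by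
  simp only [dface, vmap, Finsupp.lmapDomain_apply]
  rw [← Finsupp.mapDomain_comp, ← Finsupp.mapDomain_comp]
  rfl

lemma dbd_vmap (f : α → β) {m : ℕ} (c : DChain α (m + 1)) :
    dbd (vmap f c) = vmap f (dbd c) := by
  simp only [dbd, LinearMap.sum_apply, LinearMap.smul_apply, map_sum, map_smul]
  exact Finset.sum_congr rfl fun i _ => congrArg _ (vmap_face f i c)

lemma nerveChain_vmap {X : Type*} {O' O : Set (Set X)} {f : Set X → Set X}
    (hf : ∀ U ∈ O', U ⊆ f U ∧ f U ∈ O) {m : ℕ} {c : DChain (Set X) m}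
    (hc : NerveChain O' c) : NerveChain O (vmap f c) := by
  classical
  intro τ hτ
  have hsub := Finsupp.mapDomain_support (f := fun σ : Fin m → Set X => f ∘ σ) hτ
  obtain ⟨σ, hσ, rfl⟩ := Finset.mem_image.1 hsub
  obtain ⟨hσO, x, hx⟩ := hc σ hσ
  refine ⟨fun i => (hf (σ i) (hσO i)).2, x, ?_⟩
  rw [Set.mem_iInter] at hx ⊢
  exact fun i => (hf (σ i) (hσO i)).1 (hx i)

end Lemmas

section CechHomology

variable (X : Type*) [TopologicalSpace X]

/-- The type of open covers of `X`. -/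
def Cov := {O : Set (Set X) // IsOpenCover O}

variable {X}

/-- The subgroup of degree-`n` cycles in the nerve chain complex of the cover `O`
(`NerveChain O c`, and `dbd c = 0` unless `n = 0`, where every `0`-chain is a cycle). -/
noncomputable def nerveCyc (O : Set (Set X)) (n : ℕ) : AddSubgroup (DChain (Set X) (n + 1)) where
  carrier := {c | NerveChain O c ∧ (n = 0 ∨ dbd c = 0)}
  add_mem' := by
    rintro a b ⟨ha, ha'⟩ ⟨hb, hb'⟩
    refine ⟨nerveChain_add O ha hb, ?_⟩
    rcases ha' with h | ha'
    · exact Or.inl h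
    · rcases hb' with h | hb'
      · exact Or.inl h
      · exact Or.inr (by rw [map_add, ha', hb', add_zero])
  zero_mem' := ⟨nerveChain_zero O, Or.inr (map_zero _)⟩
  neg_mem' := by
    rintro a ⟨ha, ha'⟩
    refine ⟨nerveChain_neg O ha, ?_⟩
    rcases ha' with h | ha'
    · exact Or.inl h
    · exact Or.inr (by rw [map_neg, ha', neg_zero])

/-- The subgroup of degree-`n` boundaries of nerve chains of the cover `O`. -/
noncomputable def nerveBd (O : Set (Set X)) (n : ℕ) : AddSubgroup (DChain (Set X) (n + 1)) where
  carrier := {c | ∃ d : DChain (Set X) (n + 2), NerveChain O d ∧ dbd d = c}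
  add_mem' := by
    rintro a b ⟨d₁, h₁, rfl⟩ ⟨d₂, h₂, rfl⟩
    exact ⟨d₁ + d₂, nerveChain_add O h₁ h₂, map_add _ _ _⟩
  zero_mem' := ⟨0, nerveChain_zero O, map_zero _⟩
  neg_mem' := by
    rintro a ⟨d, h, rfl⟩
    exact ⟨-d, nerveChain_neg O h, map_neg _ _⟩

/-- The degree-`n` simplicial homology of the nerve of the cover `O`:
cycles modulo boundaries. -/
abbrev nerveH (O : Set (Set X)) (n : ℕ) :=
  nerveCyc O n ⧸ (nerveBd O n).addSubgroupOf (nerveCyc O n)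

/-- A spouse map for a refinement `O' < O`. -/
def IsSpouse (O' O : Set (Set X)) (f : Set X → Set X) : Prop :=
  ∀ U ∈ O', U ⊆ f U ∧ f U ∈ O

/-- Compatibility of homology classes under the transition maps of the Čech inverse system:
`x' ∈ H_n(N(O'))` is sent to `x ∈ H_n(N(O))`, expressed at the level of representing cycles
via (all) spouse maps. -/
def HCompat {O' O : Set (Set X)} {n : ℕ} (x' : nerveH O' n) (x : nerveH O n) : Prop :=
  ∀ (c' : nerveCyc O' n) (c : nerveCyc O n) (f : Set X → Set X), IsSpouse O' O f →
    (QuotientAddGroup.mk c' = x') → (QuotientAddGroup.mk c = x) →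
    vmap f (c' : DChain (Set X) (n + 1)) - (c : DChain (Set X) (n + 1)) ∈ nerveBd O n

end CechHomology

section Limit

variable {X : Type*} [TopologicalSpace X]

lemma nerveBd_vmap {O' O : Set (Set X)} {f : Set X → Set X} (hf : IsSpouse O' O f)
    {n : ℕ} {a : DChain (Set X) (n + 1)} (ha : a ∈ nerveBd O' n) :
    vmap f a ∈ nerveBd O n := by
  obtain ⟨d, hd, rfl⟩ := ha
  exact ⟨vmap f d, nerveChain_vmap hf hd, dbd_vmap f d⟩

/-- The Čech homology group `Ȟ_n(X,ℤ)`: the inverse limit, over the directed set of open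
covers of `X` ordered by refinement, of the homology groups of the nerves, realised as the
subgroup of compatible families inside the product. -/
noncomputable def cechHomology (X : Type*) [TopologicalSpace X] (n : ℕ) :
    AddSubgroup (∀ O : Cov X, nerveH O.1 n) where
  carrier := {s | ∀ O' O : Cov X, Refines O'.1 O.1 → HCompat (s O') (s O)}
  zero_mem' := by
    intro O' O href c' c f hf hc' hc
    have hc'amb : (c' : DChain (Set X) (n + 1)) ∈ nerveBd O'.1 n :=
      (AddSubgroup.mem_addSubgroupOf).mp (QuotientAddGroup.eq_zero_iff c' |>.mp hc')
    have hcamb : (c : DChain (Set X) (n + 1)) ∈ nerveBd O.1 n :=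
      (AddSubgroup.mem_addSubgroupOf).mp (QuotientAddGroup.eq_zero_iff c |>.mp hc)
    exact sub_mem (nerveBd_vmap hf hc'amb) hcamb
  add_mem' := by
    intro s t hs ht O' O href c' c f hf hc' hc
    obtain ⟨a', ha'⟩ := QuotientAddGroup.mk_surjective (s O')
    obtain ⟨b', hb'⟩ := QuotientAddGroup.mk_surjective (t O')
    obtain ⟨a, ha⟩ := QuotientAddGroup.mk_surjective (s O)
    obtain ⟨b, hb⟩ := QuotientAddGroup.mk_surjective (t O)
    have hw' : (-(a' + b') + c' : nerveCyc O'.1 n) ∈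
        (nerveBd O'.1 n).addSubgroupOf (nerveCyc O'.1 n) := by
      apply QuotientAddGroup.eq.mp
      show QuotientAddGroup.mk (a' + b') = QuotientAddGroup.mk c'
      rw [hc']
      show _ = s O' + t O'
      rw [← ha', ← hb']
      rfl
    have hw : (-(a + b) + c : nerveCyc O.1 n) ∈
        (nerveBd O.1 n).addSubgroupOf (nerveCyc O.1 n) := by
      apply QuotientAddGroup.eq.mp
      show QuotientAddGroup.mk (a + b) = QuotientAddGroup.mk c
      rw [hc]
      show _ = s O + t O
      rw [← ha, ← hb]
      rfl
    have hw'amb := (AddSubgroup.mem_addSubgroupOf).mp hw'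
    have hwamb := (AddSubgroup.mem_addSubgroupOf).mp hw
    have hsa := hs O' O href a' a f hf ha' ha
    have htb := ht O' O href b' b f hf hb' hb
    have key : vmap f (c' : DChain (Set X) (n + 1)) - (c : DChain (Set X) (n + 1)) =
        ((vmap f (a' : DChain (Set X) (n + 1)) - (a : DChain (Set X) (n + 1)))
          + (vmap f (b' : DChain (Set X) (n + 1)) - (b : DChain (Set X) (n + 1)))
          + vmap f ((-(a' + b') + c' : nerveCyc O'.1 n) : DChain (Set X) (n + 1)))
          - ((-(a + b) + c : nerveCyc O.1 n) : DChain (Set X) (n + 1)) := by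
      push_cast
      simp only [map_add, map_neg]
      abel
    rw [key]
    exact sub_mem (add_mem (add_mem hsa htb) (nerveBd_vmap hf hw'amb)) hwamb
  neg_mem' := by
    intro s hs O' O href c' c f hf hc' hc
    obtain ⟨a', ha'⟩ := QuotientAddGroup.mk_surjective (s O')
    obtain ⟨a, ha⟩ := QuotientAddGroup.mk_surjective (s O)
    have hw' : (a' + c' : nerveCyc O'.1 n) ∈
        (nerveBd O'.1 n).addSubgroupOf (nerveCyc O'.1 n) := by
      have : -(-a') + c' ∈ (nerveBd O'.1 n).addSubgroupOf (nerveCyc O'.1 n) := by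
        apply QuotientAddGroup.eq.mp
        show QuotientAddGroup.mk (-a') = QuotientAddGroup.mk c'
        rw [hc']
        show _ = -(s O')
        rw [← ha']
        rfl
      simpa using this
    have hw : (a + c : nerveCyc O.1 n) ∈
        (nerveBd O.1 n).addSubgroupOf (nerveCyc O.1 n) := by
      have : -(-a) + c ∈ (nerveBd O.1 n).addSubgroupOf (nerveCyc O.1 n) := by
        apply QuotientAddGroup.eq.mp
        show QuotientAddGroup.mk (-a) = QuotientAddGroup.mk c
        rw [hc]
        show _ = -(s O)
        rw [← ha]
        rfl
      simpa using this
    have hw'amb := (AddSubgroup.mem_addSubgroupOf).mp hw'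
    have hwamb := (AddSubgroup.mem_addSubgroupOf).mp hw
    have hsa := hs O' O href a' a f hf ha' ha
    have key : vmap f (c' : DChain (Set X) (n + 1)) - (c : DChain (Set X) (n + 1)) =
        (-(vmap f (a' : DChain (Set X) (n + 1)) - (a : DChain (Set X) (n + 1)))
          + vmap f ((a' + c' : nerveCyc O'.1 n) : DChain (Set X) (n + 1)))
          - ((a + c : nerveCyc O.1 n) : DChain (Set X) (n + 1)) := by
      push_cast
      simp only [map_add, map_neg]
      abel
    rw [key]
    exact sub_mem (add_mem (neg_mem hsa) (nerveBd_vmap hf hw'amb)) hwamb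

end Limit

section Discrete

variable {X : Type*} [TopologicalSpace X]

lemma fineChain_zero (O : Set (Set X)) {m : ℕ} : FineChain O (0 : DChain X m) := by
  intro σ hσ
  simp at hσ

lemma fineChain_add (O : Set (Set X)) {m : ℕ} {c d : DChain X m}
    (hc : FineChain O c) (hd : FineChain O d) : FineChain O (c + d) := by
  classical
  intro σ hσ
  rcases Finset.mem_union.1 (Finsupp.support_add hσ) with h | h
  · exact hc σ h
  · exact hd σ h

lemma fineChain_neg (O : Set (Set X)) {m : ℕ} {c : DChain X m}
    (hc : FineChain O c) : FineChain O (-c) := by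
  intro σ hσ
  rw [Finsupp.support_neg] at hσ
  exact hc σ hσ

lemma fineChain_mono {O' O : Set (Set X)} (href : Refines O' O) {m : ℕ} {c : DChain X m}
    (hc : FineChain O' c) : FineChain O c := by
  intro σ hσ
  obtain ⟨U, hU, hsub⟩ := hc σ hσ
  obtain ⟨V, hV, hUV⟩ := href U hU
  exact ⟨V, hV, hsub.trans hUV⟩

/-- The subgroup of degree-`n` cycles in the complex `𝒞_*(X,O)` of `O`-fine discrete chains
(`FineChain O c`, and `dbd c = 0` unless `n = 0`, where every `0`-chain is a cycle). -/
noncomputable def fineCyc (O : Set (Set X)) (n : ℕ) : AddSubgroup (DChain X (n + 1)) where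
  carrier := {c | FineChain O c ∧ (n = 0 ∨ dbd c = 0)}
  add_mem' := by
    rintro a b ⟨ha, ha'⟩ ⟨hb, hb'⟩
    refine ⟨fineChain_add O ha hb, ?_⟩
    rcases ha' with h | ha'
    · exact Or.inl h
    · rcases hb' with h | hb'
      · exact Or.inl h
      · exact Or.inr (by rw [map_add, ha', hb', add_zero])
  zero_mem' := ⟨fineChain_zero O, Or.inr (map_zero _)⟩
  neg_mem' := by
    rintro a ⟨ha, ha'⟩
    refine ⟨fineChain_neg O ha, ?_⟩
    rcases ha' with h | ha'
    · exact Or.inl h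
    · exact Or.inr (by rw [map_neg, ha', neg_zero])

/-- The subgroup of degree-`n` boundaries of `O`-fine discrete chains. -/
noncomputable def fineBd (O : Set (Set X)) (n : ℕ) : AddSubgroup (DChain X (n + 1)) where
  carrier := {c | ∃ d : DChain X (n + 2), FineChain O d ∧ dbd d = c}
  add_mem' := by
    rintro a b ⟨d₁, h₁, rfl⟩ ⟨d₂, h₂, rfl⟩
    exact ⟨d₁ + d₂, fineChain_add O h₁ h₂, map_add _ _ _⟩
  zero_mem' := ⟨0, fineChain_zero O, map_zero _⟩
  neg_mem' := by
    rintro a ⟨d, h, rfl⟩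
    exact ⟨-d, fineChain_neg O h, map_neg _ _⟩

lemma fineBd_mono {O' O : Set (Set X)} (href : Refines O' O) {n : ℕ}
    {a : DChain X (n + 1)} (ha : a ∈ fineBd O' n) : a ∈ fineBd O n := by
  obtain ⟨d, hd, rfl⟩ := ha
  exact ⟨d, fineChain_mono href hd, rfl⟩

/-- The degree-`n` homology `𝓗_n(X,O)` of the complex of `O`-fine discrete chains. -/
abbrev discH (O : Set (Set X)) (n : ℕ) :=
  fineCyc O n ⧸ (fineBd O n).addSubgroupOf (fineCyc O n)

/-- Compatibility of discrete homology classes under the transition maps (induced by the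
inclusions `𝒞_*(X,O') ⊆ 𝒞_*(X,O)` for `O' < O`), at the level of representing cycles. -/
def DCompat {O' O : Set (Set X)} {n : ℕ} (x' : discH O' n) (x : discH O n) : Prop :=
  ∀ (c' : fineCyc O' n) (c : fineCyc O n),
    QuotientAddGroup.mk c' = x' → QuotientAddGroup.mk c = x →
    (c' : DChain X (n + 1)) - (c : DChain X (n + 1)) ∈ fineBd O n

/-- The discrete homology group `𝓗_n(X)`: the inverse limit, over the directed set of open
covers of `X` ordered by refinement, of the groups `𝓗_n(X,O)`, realised as the subgroup of
compatible families inside the product. -/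
noncomputable def discreteHomology (X : Type*) [TopologicalSpace X] (n : ℕ) :
    AddSubgroup (∀ O : Cov X, discH O.1 n) where
  carrier := {s | ∀ O' O : Cov X, Refines O'.1 O.1 → DCompat (s O') (s O)}
  zero_mem' := by
    intro O' O href c' c hc' hc
    have hc'amb : (c' : DChain X (n + 1)) ∈ fineBd O'.1 n :=
      (AddSubgroup.mem_addSubgroupOf).mp (QuotientAddGroup.eq_zero_iff c' |>.mp hc')
    have hcamb : (c : DChain X (n + 1)) ∈ fineBd O.1 n :=
      (AddSubgroup.mem_addSubgroupOf).mp (QuotientAddGroup.eq_zero_iff c |>.mp hc)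
    exact sub_mem (fineBd_mono href hc'amb) hcamb
  add_mem' := by
    intro s t hs ht O' O href c' c hc' hc
    obtain ⟨a', ha'⟩ := QuotientAddGroup.mk_surjective (s O')
    obtain ⟨b', hb'⟩ := QuotientAddGroup.mk_surjective (t O')
    obtain ⟨a, ha⟩ := QuotientAddGroup.mk_surjective (s O)
    obtain ⟨b, hb⟩ := QuotientAddGroup.mk_surjective (t O)
    have hw' : (-(a' + b') + c' : fineCyc O'.1 n) ∈
        (fineBd O'.1 n).addSubgroupOf (fineCyc O'.1 n) := by
      apply QuotientAddGroup.eq.mp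
      show QuotientAddGroup.mk (a' + b') = QuotientAddGroup.mk c'
      rw [hc']
      show _ = s O' + t O'
      rw [← ha', ← hb']
      rfl
    have hw : (-(a + b) + c : fineCyc O.1 n) ∈
        (fineBd O.1 n).addSubgroupOf (fineCyc O.1 n) := by
      apply QuotientAddGroup.eq.mp
      show QuotientAddGroup.mk (a + b) = QuotientAddGroup.mk c
      rw [hc]
      show _ = s O + t O
      rw [← ha, ← hb]
      rfl
    have hw'amb := fineBd_mono href ((AddSubgroup.mem_addSubgroupOf).mp hw')
    have hwamb := (AddSubgroup.mem_addSubgroupOf).mp hw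
    have hsa := hs O' O href a' a ha' ha
    have htb := ht O' O href b' b hb' hb
    have key : (c' : DChain X (n + 1)) - (c : DChain X (n + 1)) =
        (((a' : DChain X (n + 1)) - (a : DChain X (n + 1)))
          + ((b' : DChain X (n + 1)) - (b : DChain X (n + 1)))
          + ((-(a' + b') + c' : fineCyc O'.1 n) : DChain X (n + 1)))
          - ((-(a + b) + c : fineCyc O.1 n) : DChain X (n + 1)) := by
      push_cast
      abel
    rw [key]
    exact sub_mem (add_mem (add_mem hsa htb) hw'amb) hwamb
  neg_mem' := by
    intro s hs O' O href c' c hc' hc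
    obtain ⟨a', ha'⟩ := QuotientAddGroup.mk_surjective (s O')
    obtain ⟨a, ha⟩ := QuotientAddGroup.mk_surjective (s O)
    have hw' : (a' + c' : fineCyc O'.1 n) ∈
        (fineBd O'.1 n).addSubgroupOf (fineCyc O'.1 n) := by
      have : -(-a') + c' ∈ (fineBd O'.1 n).addSubgroupOf (fineCyc O'.1 n) := by
        apply QuotientAddGroup.eq.mp
        show QuotientAddGroup.mk (-a') = QuotientAddGroup.mk c'
        rw [hc']
        show _ = -(s O')
        rw [← ha']
        rfl
      simpa using this
    have hw : (a + c : fineCyc O.1 n) ∈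
        (fineBd O.1 n).addSubgroupOf (fineCyc O.1 n) := by
      have : -(-a) + c ∈ (fineBd O.1 n).addSubgroupOf (fineCyc O.1 n) := by
        apply QuotientAddGroup.eq.mp
        show QuotientAddGroup.mk (-a) = QuotientAddGroup.mk c
        rw [hc]
        show _ = -(s O)
        rw [← ha]
        rfl
      simpa using this
    have hw'amb := fineBd_mono href ((AddSubgroup.mem_addSubgroupOf).mp hw')
    have hwamb := (AddSubgroup.mem_addSubgroupOf).mp hw
    have hsa := hs O' O href a' a ha' ha
    have key : (c' : DChain X (n + 1)) - (c : DChain X (n + 1)) =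
        (-((a' : DChain X (n + 1)) - (a : DChain X (n + 1)))
          + ((a' + c' : fineCyc O'.1 n) : DChain X (n + 1)))
          - ((a + c : fineCyc O.1 n) : DChain X (n + 1)) := by
      push_cast
      abel
    rw [key]
    exact sub_mem (add_mem (neg_mem hsa) hw'amb) hwamb

end Discrete

/-- `X` is super-refinable: every open cover admits a super-refinement. -/
def SuperRefinable (X : Type*) [TopologicalSpace X] : Prop :=
  ∀ O : Set (Set X), IsOpenCover O → ∃ O' : Set (Set X), IsOpenCover O' ∧ SuperRefines O' O

section Cone

variable {α β : Type*}

noncomputable def vcons (a : α) {m : ℕ} : DChain α m →ₗ[ℤ] DChain α (m + 1) :=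
  Finsupp.lmapDomain ℤ ℤ fun τ : Fin m → α => (Fin.cons a τ : Fin (m + 1) → α)

lemma vcons_single (a : α) {m : ℕ} (τ : Fin m → α) (r : ℤ) :
    vcons a (Finsupp.single τ r) = Finsupp.single (Fin.cons a τ) r :=
  Finsupp.mapDomain_single

lemma single_eq_vcons {m : ℕ} (σ : Fin (m + 1) → α) (r : ℤ) :
    Finsupp.single σ r = vcons (σ 0) (Finsupp.single (Fin.tail σ) r) := by
  rw [vcons_single, Fin.cons_self_tail]

lemma mem_support_vcons {a : α} {m : ℕ} {D : DChain α m} {τ : Fin (m + 1) → α}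
    (h : τ ∈ (vcons a D).support) : ∃ ρ ∈ D.support, Fin.cons a ρ = τ := by
  classical
  simpa using Finsupp.mapDomain_support h

lemma mem_support_vmap {f : α → β} {m : ℕ} {c : DChain α m} {τ : Fin m → β}
    (h : τ ∈ (vmap f c).support) : ∃ σ ∈ c.support, f ∘ σ = τ := by
  classical
  simpa using Finsupp.mapDomain_support h

lemma vmap_vcons (f : α → β) (a : α) {m : ℕ} (D : DChain α m) :
    vmap f (vcons a D) = vcons (f a) (vmap f D) := by
  simp only [vmap, vcons, Finsupp.lmapDomain_apply, ← Finsupp.mapDomain_comp]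
  congr 1
  funext τ
  exact Fin.comp_cons f a τ

lemma vmap_vmap {γ : Type*} (f : β → γ) (g : α → β) {m : ℕ} (c : DChain α m) :
    vmap f (vmap g c) = vmap (f ∘ g) c := by
  simp only [vmap, Finsupp.lmapDomain_apply, ← Finsupp.mapDomain_comp]
  rfl

lemma vmap_id {m : ℕ} (c : DChain α m) : vmap id c = c :=
  Finsupp.mapDomain_id

lemma vmap_eq_vmap_of_zero (f g : α → β) (D : DChain α 0) : vmap f D = vmap g D := by
  simp only [vmap, Finsupp.lmapDomain_apply]
  congr 1
  funext σ
  exact Subsingleton.elim _ _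

lemma dface_zero_vcons (a : α) {m : ℕ} (D : DChain α m) : dface 0 (vcons a D) = D := by
  simp only [dface, vcons, Finsupp.lmapDomain_apply, ← Finsupp.mapDomain_comp]
  conv_rhs => rw [← Finsupp.mapDomain_id (v := D)]
  congr 1

lemma dface_succ_vcons (a : α) {m : ℕ} (i : Fin (m + 1)) (D : DChain α (m + 1)) :
    dface i.succ (vcons a D) = vcons a (dface i D) := by
  simp only [dface, vcons, Finsupp.lmapDomain_apply, ← Finsupp.mapDomain_comp]
  congr 1
  funext τ j
  cases j using Fin.cases <;> simp [Fin.succ_succAbove_succ]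

lemma dbd_apply {m : ℕ} (c : DChain α (m + 1)) :
    dbd c = ∑ i : Fin (m + 1), ((-1 : ℤ) ^ (i : ℕ)) • dface i c := by
  simp [dbd]

lemma dbd_vcons_of_zero (a : α) (D : DChain α 0) : dbd (vcons a D) = D := by
  simp [dbd_apply, dface_zero_vcons]

lemma dbd_vcons (a : α) {m : ℕ} (D : DChain α (m + 1)) :
    dbd (vcons a D) = D - vcons a (dbd D) := by
  simp [dbd_apply, Fin.sum_univ_succ (n := m + 1), dface_zero_vcons, dface_succ_vcons, pow_succ,
    map_sum, sub_eq_add_neg]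

end Cone

section Prism

variable {α β : Type*} (f g : α → β)

noncomputable def prismSimplex : ∀ m : ℕ, (Fin m → α) → DChain β (m + 1)
  | 0, _ => 0
  | m + 1, σ => vcons (f (σ 0)) (Finsupp.single (g ∘ σ) 1 - prismSimplex m (Fin.tail σ))

/-- The prism operator `[x₀,…,xₘ] ↦ ∑ i, (-1)^i [f x₀,…,f xᵢ,g xᵢ,…,g xₘ]`, a chain homotopy
from `vmap f` to `vmap g`. -/
noncomputable def prism (m : ℕ) : DChain α m →ₗ[ℤ] DChain β (m + 1) :=
  Finsupp.linearCombination ℤ (prismSimplex f g m)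

lemma prism_zero : prism f g 0 = 0 := by
  ext
  simp [prism, prismSimplex]

lemma prism_vcons (a : α) {m : ℕ} (D : DChain α m) :
    prism f g (m + 1) (vcons a D) = vcons (f a) (vcons (g a) (vmap g D) - prism f g m D) := by
  induction D using Finsupp.induction_linear with
  | zero => simp
  | add c d hc hd =>
    rw [map_add, map_add, hc, hd, ← map_add]
    congr 1
    simp only [map_add]
    abel
  | single τ r =>
    simp [prism, prismSimplex, vcons_single, vmap, Fin.comp_cons, smul_sub, Finsupp.smul_single]

lemma dbd_prism : ∀ (m : ℕ) (c : DChain α (m + 1)),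
    dbd (prism f g (m + 1) c) = vmap g c - vmap f c - prism f g m (dbd c) := by
  intro m
  induction m with
  | zero =>
    intro c
    induction c using Finsupp.induction_linear with
    | zero => simp
    | add c d hc hd => simp only [map_add, hc, hd]; abel
    | single σ r =>
      rw [single_eq_vcons]
      simp only [prism_vcons, prism_zero, LinearMap.zero_apply, sub_zero, dbd_vcons,
        dbd_vcons_of_zero, vmap_vcons, vmap_eq_vmap_of_zero f g]
  | succ m ih =>
    intro c
    induction c using Finsupp.induction_linear with
    | zero => simp
    | add c d hc hd => simp only [map_add, hc, hd]; abel
    | single σ r =>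
      rw [single_eq_vcons]
      simp only [prism_vcons, dbd_vcons, map_sub, ih, dbd_vmap, vmap_vcons]
      abel

lemma range_prismSimplex_subset : ∀ (m : ℕ) (σ : Fin m → α), ∀ τ ∈ (prismSimplex f g m σ).support,
    Set.range τ ⊆ Set.range (f ∘ σ) ∪ Set.range (g ∘ σ) := by
  classical
  intro m
  induction m with
  | zero => simp [prismSimplex]
  | succ m ih =>
    intro σ τ hτ
    obtain ⟨ρ, hρ, rfl⟩ := mem_support_vcons hτ
    rw [Fin.range_cons]
    refine Set.insert_subset (Or.inl ⟨0, rfl⟩) ?_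
    rcases Finset.mem_union.1 (Finsupp.support_sub hρ) with h | h
    · rw [Finset.mem_singleton.1 (Finsupp.support_single_subset h)]
      exact Set.subset_union_right
    · exact (ih _ ρ h).trans <| Set.union_subset_union
        (Set.range_comp_subset_range Fin.succ (f ∘ σ))
        (Set.range_comp_subset_range Fin.succ (g ∘ σ))

lemma range_prism_subset {m : ℕ} (c : DChain α m) :
    ∀ τ ∈ (prism f g m c).support, ∃ σ ∈ c.support,
      Set.range τ ⊆ Set.range (f ∘ σ) ∪ Set.range (g ∘ σ) := by
  classical
  intro τ hτ
  rw [prism, Finsupp.linearCombination_apply, Finsupp.sum] at hτ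
  obtain ⟨σ, hσ, hτσ⟩ := Finset.mem_biUnion.1 (Finsupp.support_finsetSum hτ)
  exact ⟨σ, hσ, range_prismSimplex_subset f g m σ τ (Finsupp.support_smul hτσ)⟩

lemma exists_dbd_eq_vmap_sub_vmap {S : Set β → Prop} (hS : Antitone S) {n : ℕ}
    {c : DChain α (n + 1)} (hc : n = 0 ∨ dbd c = 0)
    (H : ∀ σ ∈ c.support, S (Set.range (f ∘ σ) ∪ Set.range (g ∘ σ))) :
    ∃ d : DChain β (n + 2), (∀ τ ∈ d.support, S (Set.range τ)) ∧
      dbd d = vmap g c - vmap f c := by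
  refine ⟨prism f g (n + 1) c, fun τ hτ => ?_, ?_⟩
  · obtain ⟨σ, hσ, hsub⟩ := range_prism_subset f g c τ hτ
    exact hS hsub (H σ hσ)
  · rw [dbd_prism]
    rcases hc with rfl | h
    · simp [prism_zero]
    · rw [h, map_zero, sub_zero]

end Prism

section Subquotient

variable {M N : Type*} [AddCommGroup M] [AddCommGroup N] {Z B : AddSubgroup M}
  {Z' B' : AddSubgroup N}

def subquotientMap (φ : M →+ N) (hZ : Z ≤ Z'.comap φ) (hB : B ≤ B'.comap φ) :
    Z ⧸ B.addSubgroupOf Z →+ Z' ⧸ B'.addSubgroupOf Z' :=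
  QuotientAddGroup.map _ _ ((φ.comp Z.subtype).codRestrict Z' fun z => hZ z.2) fun _ hz => hB hz

lemma subquotientMap_mk (φ : M →+ N) (hZ : Z ≤ Z'.comap φ) (hB : B ≤ B'.comap φ) (z : Z) :
    subquotientMap φ hZ hB (QuotientAddGroup.mk z) = QuotientAddGroup.mk ⟨φ z, hZ z.2⟩ :=
  rfl

lemma mk_eq_mk_iff_sub_mem {x y : Z} :
    (QuotientAddGroup.mk x : Z ⧸ B.addSubgroupOf Z) = QuotientAddGroup.mk y ↔
      (x : M) - y ∈ B := by
  rw [QuotientAddGroup.eq_iff_sub_mem, AddSubgroup.mem_addSubgroupOf, AddSubgroup.coe_sub]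

end Subquotient

section Contiguity

variable {X α : Type*} [TopologicalSpace X] {n : ℕ}

lemma vmap_sub_vmap_mem_nerveBd_of_contiguous {O : Set (Set X)} (f g : α → Set X)
    {c : DChain α (n + 1)} (hc : n = 0 ∨ dbd c = 0)
    (H : ∀ σ ∈ c.support, ∃ x, ∀ j, f (σ j) ∈ O ∧ g (σ j) ∈ O ∧ x ∈ f (σ j) ∧ x ∈ g (σ j)) :
    vmap g c - vmap f c ∈ nerveBd O n := by
  let S : Set (Set X) → Prop := fun A => A ⊆ O ∧ ∃ x, ∀ U ∈ A, x ∈ U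
  have hS : Antitone S := fun A B hAB hB =>
    ⟨hAB.trans hB.1, hB.2.imp fun x hx U hU => hx U (hAB hU)⟩
  obtain ⟨d, hd, hdbd⟩ := exists_dbd_eq_vmap_sub_vmap f g hS hc fun σ hσ => by
    obtain ⟨x, hx⟩ := H σ hσ
    refine ⟨Set.union_subset ?_ ?_, x, ?_⟩
    · exact Set.range_subset_iff.2 fun j => (hx j).1
    · exact Set.range_subset_iff.2 fun j => (hx j).2.1
    · rintro _ (⟨j, rfl⟩ | ⟨j, rfl⟩)
      exacts [(hx j).2.2.1, (hx j).2.2.2]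
  refine ⟨d, fun τ hτ => ?_, hdbd⟩
  obtain ⟨hO, x, hx⟩ := hd τ hτ
  exact ⟨fun i => hO ⟨i, rfl⟩, x, Set.mem_iInter.2 fun i => hx _ ⟨i, rfl⟩⟩

lemma vmap_sub_vmap_mem_fineBd_of_contiguous {O : Set (Set X)} (f g : α → X)
    {c : DChain α (n + 1)} (hc : n = 0 ∨ dbd c = 0)
    (H : ∀ σ ∈ c.support, ∃ W ∈ O, ∀ j, f (σ j) ∈ W ∧ g (σ j) ∈ W) :
    vmap g c - vmap f c ∈ fineBd O n := by
  have hS : Antitone (Tiny O) := fun A B hAB ⟨W, hW, hB⟩ => ⟨W, hW, hAB.trans hB⟩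
  obtain ⟨d, hd, hdbd⟩ := exists_dbd_eq_vmap_sub_vmap f g hS hc fun σ hσ => by
    obtain ⟨W, hW, hfg⟩ := H σ hσ
    exact ⟨W, hW, Set.union_subset (Set.range_subset_iff.2 fun j => (hfg j).1)
      (Set.range_subset_iff.2 fun j => (hfg j).2)⟩
  exact ⟨d, hd, hdbd⟩

end Contiguity

section Covers

variable {X : Type*} {A B O R : Set (Set X)}

def IsParentMap (R O : Set (Set X)) (p : X → Set X) : Prop :=
  ∀ x, p x ∈ O ∧ ∀ V ∈ R, x ∈ V → V ⊆ p x

noncomputable def SuperRefines.parent (h : SuperRefines R O) (x : X) : Set X :=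
  (h x).choose

lemma SuperRefines.isParentMap_parent (h : SuperRefines R O) : IsParentMap R O h.parent :=
  fun x => (h x).choose_spec

lemma IsParentMap.mono_left {p : X → Set X} (hp : IsParentMap R O p) (hA : Refines A R) :
    IsParentMap A O p := by
  refine fun x => ⟨(hp x).1, fun V hV hxV => ?_⟩
  obtain ⟨W, hW, hVW⟩ := hA V hV
  exact hVW.trans ((hp x).2 W hW (hVW hxV))

lemma Refines.trans (h₁ : Refines A R) (h₂ : Refines R O) : Refines A O := by
  intro U hU
  obtain ⟨V, hV, hUV⟩ := h₁ U hU
  obtain ⟨W, hW, hVW⟩ := h₂ V hV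
  exact ⟨W, hW, hUV.trans hVW⟩

lemma Refines.superRefines_trans (hA : Refines A R) (h : SuperRefines R O) : SuperRefines A O := by
  intro x
  obtain ⟨W, hW, hxW⟩ := h x
  refine ⟨W, hW, fun V hV hxV => ?_⟩
  obtain ⟨V', hV', hVV'⟩ := hA V hV
  exact hVV'.trans (hxW V' hV' (hVV' hxV))

lemma SuperRefines.trans_refines (h : SuperRefines R A) (hA : Refines A O) : SuperRefines R O := by
  intro x
  obtain ⟨W, hW, hxW⟩ := h x
  obtain ⟨W', hW', hWW'⟩ := hA W hW
  exact ⟨W', hW', fun V hV hxV => (hxW V hV hxV).trans hWW'⟩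

lemma IsOpenCover.image2_inter [TopologicalSpace X] (hA : IsOpenCover A) (hB : IsOpenCover B) :
    IsOpenCover (Set.image2 (· ∩ ·) A B) := by
  refine ⟨?_, Set.eq_univ_of_forall fun x => ?_⟩
  · rintro _ ⟨U, hU, V, hV, rfl⟩
    exact (hA.1 U hU).inter (hB.1 V hV)
  · obtain ⟨U, hU, hxU⟩ := Set.mem_sUnion.1 (hA.2.symm ▸ Set.mem_univ x)
    obtain ⟨V, hV, hxV⟩ := Set.mem_sUnion.1 (hB.2.symm ▸ Set.mem_univ x)
    exact ⟨U ∩ V, Set.mem_image2_of_mem hU hV, hxU, hxV⟩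

noncomputable def pointOf [Nonempty X] (U : Set X) : X :=
  Classical.epsilon (· ∈ U)

lemma pointOf_mem [Nonempty X] {U : Set X} (h : U.Nonempty) : pointOf U ∈ U :=
  Classical.epsilon_spec h

end Covers

section Spouse

variable {X : Type*} [TopologicalSpace X] {A B O R : Set (Set X)}

lemma IsSpouse.refines {f : Set X → Set X} (hf : IsSpouse A B f) : Refines A B :=
  fun U hU => ⟨f U, (hf U hU).2, (hf U hU).1⟩

lemma Refines.exists_isSpouse (h : Refines A B) : ∃ f, IsSpouse A B f := by
  choose! f hfB hf using h
  exact ⟨f, fun U hU => ⟨hf U hU, hfB U hU⟩⟩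

lemma IsParentMap.spouse_comp {p : X → Set X} {f : Set X → Set X} (hp : IsParentMap R A p)
    (hf : IsSpouse A O f) : IsParentMap R O (f ∘ p) :=
  fun x => ⟨(hf _ (hp x).1).2, fun V hV hxV => ((hp x).2 V hV hxV).trans (hf _ (hp x).1).1⟩

lemma IsParentMap.isSpouse_comp_pointOf [Nonempty X] {p : X → Set X} (hp : IsParentMap R O p)
    (h : SuperRefines A R) : IsSpouse A O (p ∘ pointOf) := by
  refine fun U hU => ⟨?_, (hp _).1⟩
  rcases U.eq_empty_or_nonempty with rfl | hne
  · exact Set.empty_subset _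
  have hx : pointOf U ∈ U := pointOf_mem hne
  obtain ⟨W, hW, hUW⟩ := h (pointOf U)
  exact (hUW U hU hx).trans ((hp _).2 W hW (hUW U hU hx hx))

end Spouse

section ChainMaps

variable {X α β : Type*} {A B O R : Set (Set X)} {n : ℕ}

lemma vmap_cycle (f : α → β) {c : DChain α (n + 1)} (hc : n = 0 ∨ dbd c = 0) :
    n = 0 ∨ dbd (vmap f c) = 0 :=
  hc.imp_right fun h => by rw [dbd_vmap, h, map_zero]

lemma IsParentMap.nerveChain_vmap {p : X → Set X} (hp : IsParentMap R O p) {m : ℕ}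
    {d : DChain X (m + 1)} (hd : FineChain R d) : NerveChain O (vmap p d) := by
  intro τ hτ
  obtain ⟨σ, hσ, rfl⟩ := mem_support_vmap hτ
  obtain ⟨V, hV, hσV⟩ := hd σ hσ
  exact ⟨fun j => (hp _).1,
    σ 0, Set.mem_iInter.2 fun j => (hp _).2 V hV (hσV ⟨j, rfl⟩) (hσV ⟨0, rfl⟩)⟩

lemma SuperRefines.fineChain_vmap_pointOf [Nonempty X] (h : SuperRefines R O) {m : ℕ}
    {d : DChain (Set X) m} (hd : NerveChain R d) : FineChain O (vmap pointOf d) := by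
  intro τ hτ
  obtain ⟨σ, hσ, rfl⟩ := mem_support_vmap hτ
  obtain ⟨hσR, x, hx⟩ := hd σ hσ
  obtain ⟨W, hW, hxW⟩ := h x
  refine ⟨W, hW, Set.range_subset_iff.2 fun j => ?_⟩
  have hxj : x ∈ σ j := Set.mem_iInter.1 hx j
  exact hxW _ (hσR j) hxj (pointOf_mem ⟨x, hxj⟩)

variable [TopologicalSpace X]

lemma IsParentMap.fineCyc_le {p : X → Set X} (hp : IsParentMap R O p) :
    fineCyc R n ≤ (nerveCyc O n).comap (vmap p).toAddMonoidHom :=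
  fun _ hc => ⟨hp.nerveChain_vmap hc.1, vmap_cycle p hc.2⟩

lemma IsParentMap.fineBd_le {p : X → Set X} (hp : IsParentMap R O p) :
    fineBd R n ≤ (nerveBd O n).comap (vmap p).toAddMonoidHom := by
  rintro _ ⟨d, hd, rfl⟩
  exact ⟨vmap p d, hp.nerveChain_vmap hd, dbd_vmap p d⟩

lemma SuperRefines.nerveCyc_le [Nonempty X] (h : SuperRefines R O) :
    nerveCyc R n ≤ (fineCyc O n).comap (vmap pointOf).toAddMonoidHom :=
  fun _ hc => ⟨h.fineChain_vmap_pointOf hc.1, vmap_cycle pointOf hc.2⟩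

lemma SuperRefines.nerveBd_le [Nonempty X] (h : SuperRefines R O) :
    nerveBd R n ≤ (fineBd O n).comap (vmap pointOf).toAddMonoidHom := by
  rintro _ ⟨d, hd, rfl⟩
  exact ⟨vmap pointOf d, h.fineChain_vmap_pointOf hd, dbd_vmap pointOf d⟩

lemma IsSpouse.nerveCyc_le {f : Set X → Set X} (hf : IsSpouse A B f) :
    nerveCyc A n ≤ (nerveCyc B n).comap (vmap f).toAddMonoidHom :=
  fun _ hc => ⟨nerveChain_vmap hf hc.1, vmap_cycle f hc.2⟩

lemma IsSpouse.nerveBd_le {f : Set X → Set X} (hf : IsSpouse A B f) :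
    nerveBd A n ≤ (nerveBd B n).comap (vmap f).toAddMonoidHom :=
  fun _ hc => nerveBd_vmap hf hc

lemma Refines.fineCyc_le (h : Refines A B) : fineCyc A n ≤ fineCyc B n :=
  fun _ hc => ⟨fineChain_mono h hc.1, hc.2⟩

lemma Refines.fineBd_le (h : Refines A B) : fineBd A n ≤ fineBd B n :=
  fun _ hc => fineBd_mono h hc

end ChainMaps

section Contiguous

variable {X : Type*} [TopologicalSpace X] {A B O P R : Set (Set X)} {n : ℕ}

lemma IsSpouse.vmap_sub_vmap_mem_nerveBd {f g : Set X → Set X} (hf : IsSpouse A B f)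
    (hg : IsSpouse A B g) {c : DChain (Set X) (n + 1)} (hc : c ∈ nerveCyc A n) :
    vmap f c - vmap g c ∈ nerveBd B n := by
  refine vmap_sub_vmap_mem_nerveBd_of_contiguous g f hc.2 fun σ hσ => ?_
  obtain ⟨hσA, x, hx⟩ := hc.1 σ hσ
  refine ⟨x, fun j => ?_⟩
  have hxj : x ∈ σ j := Set.mem_iInter.1 hx j
  exact ⟨(hg _ (hσA j)).2, (hf _ (hσA j)).2, (hg _ (hσA j)).1 hxj, (hf _ (hσA j)).1 hxj⟩

lemma IsParentMap.vmap_sub_vmap_mem_nerveBd {p q : X → Set X} (hp : IsParentMap R O p)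
    (hq : IsParentMap R O q) {c : DChain X (n + 1)} (hc : c ∈ fineCyc R n) :
    vmap p c - vmap q c ∈ nerveBd O n := by
  refine vmap_sub_vmap_mem_nerveBd_of_contiguous q p hc.2 fun σ hσ => ?_
  obtain ⟨V, hV, hσV⟩ := hc.1 σ hσ
  refine ⟨σ 0, fun j => ?_⟩
  have hj : σ j ∈ V := hσV ⟨j, rfl⟩
  exact ⟨(hq _).1, (hp _).1, (hq _).2 V hV hj (hσV ⟨0, rfl⟩), (hp _).2 V hV hj (hσV ⟨0, rfl⟩)⟩

lemma SuperRefines.vmap_pointOf_sub_mem_fineBd [Nonempty X] {s : Set X → Set X}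
    (h : SuperRefines B O) (hs : IsSpouse A B s) {c : DChain (Set X) (n + 1)}
    (hc : c ∈ nerveCyc A n) : vmap pointOf (vmap s c) - vmap pointOf c ∈ fineBd O n := by
  rw [vmap_vmap]
  refine vmap_sub_vmap_mem_fineBd_of_contiguous pointOf (pointOf ∘ s) hc.2 fun σ hσ => ?_
  obtain ⟨hσA, x, hx⟩ := hc.1 σ hσ
  obtain ⟨W, hW, hxW⟩ := h x
  refine ⟨W, hW, fun j => ?_⟩
  obtain ⟨hσs, hsB⟩ := hs _ (hσA j)
  have hxj : x ∈ σ j := Set.mem_iInter.1 hx j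
  have hsW : s (σ j) ⊆ W := hxW _ hsB (hσs hxj)
  exact ⟨hsW (hσs (pointOf_mem ⟨x, hxj⟩)), hsW (pointOf_mem ⟨x, hσs hxj⟩)⟩

lemma IsParentMap.vmap_pointOf_sub_mem_fineBd [Nonempty X] {p : X → Set X}
    (hp : IsParentMap R P p) (h : SuperRefines P O) {c : DChain X (n + 1)}
    (hc : c ∈ fineCyc R n) : vmap pointOf (vmap p c) - c ∈ fineBd O n := by
  suffices vmap (pointOf ∘ p) c - vmap id c ∈ fineBd O n by rwa [vmap_id, ← vmap_vmap] at this
  refine vmap_sub_vmap_mem_fineBd_of_contiguous id (pointOf ∘ p) hc.2 fun σ hσ => ?_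
  obtain ⟨V, hV, hσV⟩ := hc.1 σ hσ
  obtain ⟨W, hW, hσW⟩ := h (σ 0)
  refine ⟨W, hW, fun j => ?_⟩
  have hVp : V ⊆ p (σ j) := (hp _).2 V hV (hσV ⟨j, rfl⟩)
  have hpW : p (σ j) ⊆ W := hσW _ (hp _).1 (hVp (hσV ⟨0, rfl⟩))
  exact ⟨hpW (hVp (hσV ⟨j, rfl⟩)), hpW (pointOf_mem ⟨_, hVp (hσV ⟨j, rfl⟩)⟩)⟩

end Contiguous

section HomologyMaps

variable {X : Type*} [TopologicalSpace X] {A B O P R : Set (Set X)} {n : ℕ}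

noncomputable def spouseHom {f : Set X → Set X} (hf : IsSpouse A B f) (n : ℕ) :
    nerveH A n →+ nerveH B n :=
  subquotientMap (vmap f).toAddMonoidHom hf.nerveCyc_le hf.nerveBd_le

noncomputable def inclusionHom (h : Refines A B) (n : ℕ) : discH A n →+ discH B n :=
  subquotientMap (AddMonoidHom.id _) h.fineCyc_le h.fineBd_le

noncomputable def pointHom [Nonempty X] (h : SuperRefines A B) (n : ℕ) :
    nerveH A n →+ discH B n :=
  subquotientMap (vmap pointOf).toAddMonoidHom h.nerveCyc_le h.nerveBd_le

noncomputable def parentHom {p : X → Set X} (hp : IsParentMap A B p) (n : ℕ) :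
    discH A n →+ nerveH B n :=
  subquotientMap (vmap p).toAddMonoidHom hp.fineCyc_le hp.fineBd_le

lemma hCompat_iff {x' : nerveH A n} {x : nerveH B n} :
    HCompat x' x ↔ ∀ f (hf : IsSpouse A B f), spouseHom hf n x' = x := by
  constructor
  · intro H f hf
    obtain ⟨c', rfl⟩ := QuotientAddGroup.mk_surjective x'
    obtain ⟨c, rfl⟩ := QuotientAddGroup.mk_surjective x
    exact mk_eq_mk_iff_sub_mem.2 (H c' c f hf rfl rfl)
  · rintro H c' c f hf rfl rfl
    exact mk_eq_mk_iff_sub_mem.1 (H f hf)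

lemma dCompat_iff (h : Refines A B) {y' : discH A n} {y : discH B n} :
    DCompat y' y ↔ inclusionHom h n y' = y := by
  constructor
  · intro H
    obtain ⟨c', rfl⟩ := QuotientAddGroup.mk_surjective y'
    obtain ⟨c, rfl⟩ := QuotientAddGroup.mk_surjective y
    exact mk_eq_mk_iff_sub_mem.2 (H c' c rfl rfl)
  · rintro H c' c rfl rfl
    exact mk_eq_mk_iff_sub_mem.1 H

lemma spouseHom_eq {f g : Set X → Set X} (hf : IsSpouse A B f) (hg : IsSpouse A B g) :
    spouseHom hf n = spouseHom hg n := by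
  ext c
  exact mk_eq_mk_iff_sub_mem.2 (hf.vmap_sub_vmap_mem_nerveBd hg c.2)

lemma parentHom_eq {p q : X → Set X} (hp : IsParentMap A B p) (hq : IsParentMap A B q) :
    parentHom hp n = parentHom hq n := by
  ext c
  exact mk_eq_mk_iff_sub_mem.2 (hp.vmap_sub_vmap_mem_nerveBd hq c.2)

lemma spouseHom_parentHom {p : X → Set X} {f : Set X → Set X} (hp : IsParentMap R A p)
    (hf : IsSpouse A O f) (x : discH R n) :
    spouseHom hf n (parentHom hp n x) = parentHom (hp.spouse_comp hf) n x := by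
  obtain ⟨c, rfl⟩ := QuotientAddGroup.mk_surjective x
  exact congrArg _ (Subtype.ext (vmap_vmap f p c.1))

lemma parentHom_inclusionHom {p : X → Set X} (hp : IsParentMap R O p) (hA : Refines A R)
    (x : discH A n) : parentHom hp n (inclusionHom hA n x) = parentHom (hp.mono_left hA) n x := by
  obtain ⟨c, rfl⟩ := QuotientAddGroup.mk_surjective x
  rfl

lemma pointHom_spouseHom [Nonempty X] {s : Set X → Set X} (h : SuperRefines B O)
    (hs : IsSpouse A B s) (x : nerveH A n) :
    pointHom h n (spouseHom hs n x) = pointHom (hs.refines.superRefines_trans h) n x := by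
  obtain ⟨c, rfl⟩ := QuotientAddGroup.mk_surjective x
  exact mk_eq_mk_iff_sub_mem.2 (h.vmap_pointOf_sub_mem_fineBd hs c.2)

lemma inclusionHom_pointHom [Nonempty X] (h : SuperRefines R A) (hA : Refines A O)
    (x : nerveH R n) : inclusionHom hA n (pointHom h n x) = pointHom (h.trans_refines hA) n x := by
  obtain ⟨c, rfl⟩ := QuotientAddGroup.mk_surjective x
  rfl

lemma parentHom_pointHom [Nonempty X] {p : X → Set X} (hp : IsParentMap R O p)
    (h : SuperRefines A R) (x : nerveH A n) :
    parentHom hp n (pointHom h n x) = spouseHom (hp.isSpouse_comp_pointOf h) n x := by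
  obtain ⟨c, rfl⟩ := QuotientAddGroup.mk_surjective x
  exact congrArg _ (Subtype.ext (vmap_vmap p pointOf c.1))

lemma pointHom_parentHom [Nonempty X] {p : X → Set X} (hp : IsParentMap R P p)
    (h : SuperRefines P O) (hR : Refines R O) (x : discH R n) :
    pointHom h n (parentHom hp n x) = inclusionHom hR n x := by
  obtain ⟨c, rfl⟩ := QuotientAddGroup.mk_surjective x
  exact mk_eq_mk_iff_sub_mem.2 (hp.vmap_pointOf_sub_mem_fineBd h c.2)

end HomologyMaps

section Limit

variable {X : Type*} [TopologicalSpace X] {n : ℕ}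

def Cov.inter (A B : Cov X) : Cov X :=
  ⟨Set.image2 (· ∩ ·) A.1 B.1, A.2.image2_inter B.2⟩

lemma Cov.refines_inter_left (A B : Cov X) : Refines (A.inter B).1 A.1 := by
  rintro _ ⟨U, hU, V, -, rfl⟩
  exact ⟨U, hU, Set.inter_subset_left⟩

lemma Cov.refines_inter_right (A B : Cov X) : Refines (A.inter B).1 B.1 := by
  rintro _ ⟨-, -, V, hV, rfl⟩
  exact ⟨V, hV, Set.inter_subset_right⟩

lemma SuperRefinable.exists_superRefines_refines (hsr : SuperRefinable X) (O : Cov X) :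
    ∃ P : Cov X, SuperRefines P.1 O.1 ∧ Refines P.1 O.1 := by
  obtain ⟨R, hR, hRO⟩ := hsr O.1 O.2
  exact ⟨Cov.inter ⟨R, hR⟩ O, (Cov.refines_inter_left _ _).superRefines_trans hRO,
    Cov.refines_inter_right _ _⟩

variable (hsr : SuperRefinable X)

noncomputable def superRefinement (O : Cov X) : Cov X :=
  (hsr.exists_superRefines_refines O).choose

lemma superRefines_superRefinement (O : Cov X) : SuperRefines (superRefinement hsr O).1 O.1 :=
  (hsr.exists_superRefines_refines O).choose_spec.1

lemma refines_superRefinement (O : Cov X) : Refines (superRefinement hsr O).1 O.1 :=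
  (hsr.exists_superRefines_refines O).choose_spec.2

noncomputable def cechToDiscrete [Nonempty X] (n : ℕ) :
    (∀ O : Cov X, nerveH O.1 n) →+ ∀ O : Cov X, discH O.1 n :=
  AddMonoidHom.pi fun O => (pointHom (superRefines_superRefinement hsr O) n).comp
    (Pi.evalAddMonoidHom _ (superRefinement hsr O))

noncomputable def discreteToCech (n : ℕ) :
    (∀ O : Cov X, discH O.1 n) →+ ∀ O : Cov X, nerveH O.1 n :=
  AddMonoidHom.pi fun O =>
    (parentHom (superRefines_superRefinement hsr O).isParentMap_parent n).comp
      (Pi.evalAddMonoidHom _ (superRefinement hsr O))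

lemma cechToDiscrete_apply [Nonempty X] (u : ∀ O : Cov X, nerveH O.1 n) (O : Cov X) :
    cechToDiscrete hsr n u O =
      pointHom (superRefines_superRefinement hsr O) n (u (superRefinement hsr O)) :=
  rfl

lemma discreteToCech_apply (v : ∀ O : Cov X, discH O.1 n) (O : Cov X) :
    discreteToCech hsr n v O = parentHom (superRefines_superRefinement hsr O).isParentMap_parent n
      (v (superRefinement hsr O)) :=
  rfl

lemma cechToDiscrete_mem [Nonempty X] {u : ∀ O : Cov X, nerveH O.1 n}
    (hu : u ∈ cechHomology X n) : cechToDiscrete hsr n u ∈ discreteHomology X n := by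
  intro O' O hO
  set P' := superRefinement hsr O'
  set P := superRefinement hsr O
  -- both components are images of `u (P'.inter P)`
  obtain ⟨s', hs'⟩ := (Cov.refines_inter_left P' P).exists_isSpouse
  obtain ⟨s, hs⟩ := (Cov.refines_inter_right P' P).exists_isSpouse
  rw [dCompat_iff hO, cechToDiscrete_apply, cechToDiscrete_apply,
    ← hCompat_iff.1 (hu _ P' hs'.refines) s' hs', ← hCompat_iff.1 (hu _ P hs.refines) s hs,
    pointHom_spouseHom, pointHom_spouseHom, inclusionHom_pointHom]

lemma discreteToCech_mem {v : ∀ O : Cov X, discH O.1 n} (hv : v ∈ discreteHomology X n) :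
    discreteToCech hsr n v ∈ cechHomology X n := by
  intro O' O hO
  set P' := superRefinement hsr O'
  set P := superRefinement hsr O
  have hQP' := Cov.refines_inter_left P' P
  have hQP := Cov.refines_inter_right P' P
  refine hCompat_iff.2 fun f hf => ?_
  rw [discreteToCech_apply, discreteToCech_apply, ← (dCompat_iff hQP').1 (hv _ P' hQP'),
    ← (dCompat_iff hQP).1 (hv _ P hQP), spouseHom_parentHom, parentHom_inclusionHom,
    parentHom_inclusionHom]
  exact DFunLike.congr_fun (parentHom_eq _ _) _

lemma discreteToCech_cechToDiscrete [Nonempty X] {u : ∀ O : Cov X, nerveH O.1 n}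
    (hu : u ∈ cechHomology X n) : discreteToCech hsr n (cechToDiscrete hsr n u) = u := by
  funext O
  set P := superRefinement hsr (superRefinement hsr O)
  have hPO : Refines P.1 O.1 :=
    (refines_superRefinement hsr _).trans (refines_superRefinement hsr O)
  obtain ⟨s, hs⟩ := hPO.exists_isSpouse
  rw [discreteToCech_apply, cechToDiscrete_apply, parentHom_pointHom, spouseHom_eq _ hs]
  exact hCompat_iff.1 (hu P O hPO) s hs

lemma cechToDiscrete_discreteToCech [Nonempty X] {v : ∀ O : Cov X, discH O.1 n}
    (hv : v ∈ discreteHomology X n) : cechToDiscrete hsr n (discreteToCech hsr n v) = v := by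
  funext O
  set P := superRefinement hsr (superRefinement hsr O)
  have hPO : Refines P.1 O.1 :=
    (refines_superRefinement hsr _).trans (refines_superRefinement hsr O)
  rw [cechToDiscrete_apply, discreteToCech_apply, pointHom_parentHom _ _ hPO]
  exact (dCompat_iff hPO).1 (hv P O hPO)

noncomputable def cechHomologyEquivDiscreteHomology [Nonempty X] (n : ℕ) :
    cechHomology X n ≃+ discreteHomology X n where
  toFun u := ⟨cechToDiscrete hsr n u, cechToDiscrete_mem hsr u.2⟩
  invFun v := ⟨discreteToCech hsr n v, discreteToCech_mem hsr v.2⟩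
  left_inv u := Subtype.ext (discreteToCech_cechToDiscrete hsr u.2)
  right_inv v := Subtype.ext (cechToDiscrete_discreteToCech hsr v.2)
  map_add' _ _ := Subtype.ext (map_add _ _ _)

end Limit

section Empty

variable {X : Type*} [TopologicalSpace X] [IsEmpty X]

lemma subsingleton_cechHomology (n : ℕ) : Subsingleton (cechHomology X n) := by
  have (O : Set (Set X)) : Subsingleton (nerveH O n) := by
    have hzero (c : nerveCyc O n) : (c : DChain (Set X) (n + 1)) = 0 :=
      Finsupp.support_eq_empty.1 <| Finset.eq_empty_of_forall_notMem fun τ hτ =>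
        isEmptyElim (c.2.1 τ hτ).2.some
    have : Subsingleton (nerveCyc O n) :=
      ⟨fun a b => Subtype.ext ((hzero a).trans (hzero b).symm)⟩
    exact QuotientAddGroup.mk_surjective.subsingleton
  infer_instance

lemma subsingleton_discreteHomology (n : ℕ) : Subsingleton (discreteHomology X n) := by
  have (O : Set (Set X)) : Subsingleton (discH O n) := QuotientAddGroup.mk_surjective.subsingleton
  infer_instance

end Empty

/-- If a topological space `X` is super-refinable, then in every degree
`n` its Čech homology `Ȟ_n(X,ℤ)` is isomorphic to its discrete homology `𝓗_n(X)`. -/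
theorem cechHomology_iso_discreteHomology {X : Type*} [TopologicalSpace X]
    (hsr : SuperRefinable X) (n : ℕ) :
    Nonempty ((cechHomology X n) ≃+ (discreteHomology X n)) := by
  rcases isEmpty_or_nonempty X with hX | hX
  · have := subsingleton_cechHomology (X := X) n
    have := subsingleton_discreteHomology (X := X) n
    let _ := uniqueOfSubsingleton (0 : cechHomology X n)
    let _ := uniqueOfSubsingleton (0 : discreteHomology X n)
    exact ⟨AddEquiv.ofUnique⟩
  · exact ⟨cechHomologyEquivDiscreteHomology hsr n⟩
end

section
/- Assume the ball-system setup with filling hypotheses (F1) and (F2). Let N ≥ 1 and let 𝔹 be a nonempty finite subset of (1/N)𝔅 such that the balls of 2K𝔹 are pairwise disjoint. Let 1 ≤ i ≤ k, let 0 < δ ≤ 𝔯_min(𝔹), and let d be a g(δ)-fine discrete i-chain in 𝒮 such that supp(∂d) is disjoint from every ball in 𝔹. Then there exists a discrete i-chain d' in 𝒮 such that: (1) d' is δ-fine and ∂d' = ∂d; (2) supp(d') is disjoint from every ball in (1/K)𝔹; (3) supp(d − d') is contained in the union of the balls in 2K𝔹; (4) diam(d') ≤ diam(d) + 4K·√(𝔯_max(𝔹));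 (5) if moreover d is g(g(δ))-fine, then d − d' = ∂e for a δ-fine discrete (i+1)-chain e supported in the union of the balls in 2K²𝔹. -/
/-- A discrete chain is `δ`-fine if each of its simplices has diameter at most `δ`. -/
def FineLE {X : Type*} [PseudoMetricSpace X] {m : ℕ} (δ : ℝ) (c : DChain X m) : Prop :=
  ∀ σ ∈ c.support, Metric.diam (Set.range σ) ≤ δ

/-- The closed annulus `A(p; r₁, r₂)` around `p`. -/
def annulus {X : Type*} [PseudoMetricSpace X] (p : X) (r₁ r₂ : ℝ) : Set X :=
  {x | r₁ ≤ dist p x ∧ dist p x ≤ r₂}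

/-- Filling hypothesis (F1): reduced `g(δ)`-fine discrete `i`-cycles (`0 ≤ i < k`) supported
in an annulus `A(p; r₁, r₂)` with `δ ≤ r₁ < r₂ ≤ r_p/K` around a point `p ∈ P` bound
`δ`-fine chains in `A(p; r₁/K, K·r₂)` of diameter at most `K·√(diam c)`. -/
def FillAnnuli {𝒮 : Type*} [MetricSpace 𝒮] (k : ℕ) (K : ℝ) (g : ℝ → ℝ)
    (P : Set 𝒮) (r : 𝒮 → ℝ) : Prop :=
  ∀ p ∈ P, ∀ δ : ℝ, 0 < δ → ∀ i : ℕ, i < k → ∀ r₁ r₂ : ℝ, δ ≤ r₁ → r₁ < r₂ → r₂ ≤ r p / K →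
    ∀ c : DChain 𝒮 (i + 1), dbd c = 0 → FineLE (g δ) c → chainSupp c ⊆ annulus p r₁ r₂ →
      ∃ d : DChain 𝒮 (i + 2), dbd d = c ∧ FineLE δ d ∧
        chainSupp d ⊆ annulus p (r₁ / K) (K * r₂) ∧
        Metric.diam (chainSupp d) ≤ K * Real.sqrt (Metric.diam (chainSupp c))

/-- Filling hypothesis (F2): reduced `g(δ)`-fine discrete `i`-cycles (`0 ≤ i ≤ k`) supported
in a ball `B(p, r₂)` with `0 < r₂ ≤ r_p/K` around a point `p ∈ P` bound `δ`-fine chains in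
`B(p, K·r₂)` of diameter at most `K·√(diam c)`. -/
def FillBalls {𝒮 : Type*} [MetricSpace 𝒮] (k : ℕ) (K : ℝ) (g : ℝ → ℝ)
    (P : Set 𝒮) (r : 𝒮 → ℝ) : Prop :=
  ∀ p ∈ P, ∀ δ : ℝ, 0 < δ → ∀ i : ℕ, i ≤ k → ∀ r₂ : ℝ, 0 < r₂ → r₂ ≤ r p / K →
    ∀ c : DChain 𝒮 (i + 1), dbd c = 0 → FineLE (g δ) c →
      chainSupp c ⊆ Metric.closedBall p r₂ →
      ∃ d : DChain 𝒮 (i + 2), dbd d = c ∧ FineLE δ d ∧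
        chainSupp d ⊆ Metric.closedBall p (K * r₂) ∧
        Metric.diam (chainSupp d) ≤ K * Real.sqrt (Metric.diam (chainSupp c))

open Metric Set

/-!
Cut `d` into the simplices meeting a ball `B(q, s_q)` of `𝔹` and the rest. The simplices are
much smaller than the radii and the `2K`-enlargements of the balls are disjoint, so each simplex
meets at most one ball, and the piece `d_q` meeting `B(q, s_q)` lies in `B(q, 2 s_q)`. Its
boundary misses `B(q, s_q)`: the part coming from `∂d` by hypothesis, the rest because it is
also a boundary of simplices not meeting the ball. So `∂d_q` is a fine cycle in an annulus
around `q`, and (F1) fills it by a chain `e_q` in a slightly larger annulus, which misses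
`B(q, s_q / K)` and stays within `2K√s_q` of `d`. Replacing every `d_q` by `e_q` gives `d'`.
The differences `d_q - e_q` are cycles in `B(q, 2K s_q)`; (F2) fills them in `B(q, 2K² s_q)`.
-/

section Boundary
variable {α : Type*} {m : ℕ}

lemma dface_single (i : Fin (m + 1)) (σ : Fin (m + 1) → α) (z : ℤ) :
    dface i (Finsupp.single σ z) = Finsupp.single (σ ∘ i.succAbove) z := by
  simp [dface]

lemma dbd_single (σ : Fin (m + 1) → α) (z : ℤ) :
    dbd (Finsupp.single σ z) =
      ∑ i : Fin (m + 1), (-1 : ℤ) ^ (i : ℕ) • Finsupp.single (σ ∘ i.succAbove) z := by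
  simp [dbd, dface_single]

lemma neg_one_pow_succAbove_add_predAbove (i : Fin (m + 2)) (j : Fin (m + 1)) :
    (-1 : ℤ) ^ ((i.succAbove j : ℕ) + (j.predAbove i : ℕ)) = -(-1) ^ ((i : ℕ) + j) := by
  obtain h | h : (i.succAbove j : ℕ) + j.predAbove i + 1 = i + j ∨
      (i.succAbove j : ℕ) + j.predAbove i = i + j + 1 := by
    simp only [Fin.succAbove, Fin.predAbove, Fin.lt_def]
    split_ifs <;> simp <;> omega
  · rw [← h, pow_succ]; ring
  · rw [h, pow_succ]; ring

theorem dbd_dbd (c : DChain α (m + 2)) : dbd (dbd c) = 0 := by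
  induction c using Finsupp.induction_linear with
  | zero => simp
  | add a b ha hb => simp [ha, hb]
  | single σ z =>
    simp only [dbd_single, map_sum, map_zsmul, Finset.smul_sum, smul_smul, ← pow_add,
      Function.comp_assoc]
    rw [← Finset.sum_product']
    refine Finset.sum_ninvolution (fun p => (p.1.succAbove p.2, p.2.predAbove p.1)) ?_ ?_
      (fun _ => Finset.mem_univ _) ?_
    · rintro ⟨i, j⟩
      have hface : σ ∘ (i.succAbove j).succAbove ∘ (j.predAbove i).succAbove =
          σ ∘ i.succAbove ∘ j.succAbove :=
        funext fun k => congrArg σ (Fin.succAbove_succAbove_succAbove_predAbove i j k)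
      simp only [neg_one_pow_succAbove_add_predAbove, hface, neg_smul, add_neg_cancel]
    · rintro ⟨i, j⟩ - h
      exact Fin.succAbove_ne i j (congrArg Prod.fst h)
    · rintro ⟨i, j⟩
      simp [Fin.succAbove_succAbove_predAbove, Fin.predAbove_predAbove_succAbove]

end Boundary

section Support
variable {α : Type*} {m : ℕ}

lemma mem_chainSupp {c : DChain α m} {x : α} :
    x ∈ chainSupp c ↔ ∃ σ ∈ c.support, ∃ t, σ t = x := by
  simp [chainSupp]

lemma chainSupp_mono {c d : DChain α m} (h : c.support ⊆ d.support) :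
    chainSupp c ⊆ chainSupp d :=
  biUnion_subset_biUnion_left h

@[simp]
lemma chainSupp_zero : chainSupp (0 : DChain α m) = ∅ := by
  simp [chainSupp]

lemma chainSupp_finite (c : DChain α m) : (chainSupp c).Finite :=
  c.support.finite_toSet.biUnion fun σ _ => finite_range σ

lemma chainSupp_nonempty {c : DChain α (m + 1)} (h : c ≠ 0) : (chainSupp c).Nonempty := by
  obtain ⟨σ, hσ⟩ := Finsupp.support_nonempty_iff.2 h
  exact ⟨σ 0, mem_chainSupp.2 ⟨σ, hσ, 0, rfl⟩⟩

lemma chainSupp_sum_subset {ι : Type*} (Q : Finset ι) (E : ι → DChain α m) :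
    chainSupp (∑ q ∈ Q, E q) ⊆ ⋃ q ∈ Q, chainSupp (E q) := by
  classical
  intro x hx
  obtain ⟨σ, hσ, t, rfl⟩ := mem_chainSupp.1 hx
  obtain ⟨q, hq, hσq⟩ := Finset.mem_biUnion.1 (Finsupp.support_finsetSum hσ)
  exact mem_biUnion hq (mem_chainSupp.2 ⟨σ, hσq, t, rfl⟩)

lemma chainSupp_add_subset (a b : DChain α m) :
    chainSupp (a + b) ⊆ chainSupp a ∪ chainSupp b := by
  classical
  intro x hx
  obtain ⟨σ, hσ, t, rfl⟩ := mem_chainSupp.1 hx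
  rcases Finset.mem_union.1 (Finsupp.support_add hσ) with h | h
  exacts [Or.inl (mem_chainSupp.2 ⟨σ, h, t, rfl⟩), Or.inr (mem_chainSupp.2 ⟨σ, h, t, rfl⟩)]

lemma chainSupp_sub_subset (a b : DChain α m) :
    chainSupp (a - b) ⊆ chainSupp a ∪ chainSupp b := by
  simpa [sub_eq_add_neg, chainSupp, Finsupp.support_neg] using chainSupp_add_subset a (-b)

lemma chainSupp_add_sum_subset {ι : Type*} (a : DChain α m) (Q : Finset ι)
    (E : ι → DChain α m) :
    chainSupp (a + ∑ q ∈ Q, E q) ⊆ chainSupp a ∪ ⋃ q ∈ Q, chainSupp (E q) :=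
  (chainSupp_add_subset _ _).trans (union_subset_union_right _ (chainSupp_sum_subset Q E))

lemma exists_range_subset_of_mem_support_dbd {c : DChain α (m + 1)} {σ : Fin m → α}
    (h : σ ∈ (dbd c).support) : ∃ τ ∈ c.support, range σ ⊆ range τ := by
  classical
  rw [dbd, LinearMap.sum_apply] at h
  obtain ⟨i, -, hi⟩ := Finsupp.mem_support_finsetSum _ h
  have hface : σ ∈ (dface i c).support := Finsupp.support_smul hi
  obtain ⟨τ, hτ, rfl⟩ := Finset.mem_image.1 (Finsupp.mapDomain_support hface)
  exact ⟨τ, hτ, range_comp_subset_range _ _⟩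

lemma chainSupp_dbd_subset (c : DChain α (m + 1)) : chainSupp (dbd c) ⊆ chainSupp c := by
  intro x hx
  obtain ⟨σ, hσ, t, rfl⟩ := mem_chainSupp.1 hx
  obtain ⟨τ, hτ, hsub⟩ := exists_range_subset_of_mem_support_dbd hσ
  obtain ⟨u, hu⟩ := hsub ⟨t, rfl⟩
  exact mem_chainSupp.2 ⟨τ, hτ, u, hu⟩

end Support

namespace FineLE
variable {X : Type*} [PseudoMetricSpace X] {m : ℕ} {δ : ℝ}

lemma mono {δ' : ℝ} (h : δ ≤ δ') {c : DChain X m} (hc : FineLE δ c) : FineLE δ' c :=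
  fun σ hσ => (hc σ hσ).trans h

lemma anti {c d : DChain X m} (hd : FineLE δ d) (h : c.support ⊆ d.support) : FineLE δ c :=
  fun σ hσ => hd σ (h hσ)

lemma zero : FineLE δ (0 : DChain X m) := by
  simp [FineLE]

lemma add {a b : DChain X m} (ha : FineLE δ a) (hb : FineLE δ b) : FineLE δ (a + b) := by
  classical
  intro σ hσ
  rcases Finset.mem_union.1 (Finsupp.support_add hσ) with h | h
  exacts [ha σ h, hb σ h]

lemma sub {a b : DChain X m} (ha : FineLE δ a) (hb : FineLE δ b) : FineLE δ (a - b) := by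
  rw [sub_eq_add_neg]
  exact ha.add fun σ hσ => hb σ (by rwa [Finsupp.support_neg] at hσ)

lemma sum {ι : Type*} {Q : Finset ι} {E : ι → DChain X m} (h : ∀ q ∈ Q, FineLE δ (E q)) :
    FineLE δ (∑ q ∈ Q, E q) := by
  classical
  intro σ hσ
  obtain ⟨q, hq, hσq⟩ := Finset.mem_biUnion.1 (Finsupp.support_finsetSum hσ)
  exact h q hq σ hσq

lemma dbd {c : DChain X (m + 1)} (hc : FineLE δ c) : FineLE δ (dbd c) := by
  intro σ hσ
  obtain ⟨τ, hτ, hsub⟩ := exists_range_subset_of_mem_support_dbd hσ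
  exact (diam_mono hsub (finite_range τ).isBounded).trans (hc τ hτ)

end FineLE

lemma exists_dbd_eq_sum {X : Type*} [PseudoMetricSpace X] {m : ℕ} {ι : Type*} {Q : Finset ι}
    {D : ι → DChain X m} {δ : ℝ} {U : ι → Set X}
    (h : ∀ q ∈ Q, ∃ e : DChain X (m + 1), dbd e = D q ∧ FineLE δ e ∧ chainSupp e ⊆ U q) :
    ∃ e : DChain X (m + 1), dbd e = ∑ q ∈ Q, D q ∧ FineLE δ e ∧ chainSupp e ⊆ ⋃ q ∈ Q, U q := by
  choose! e he using h
  refine ⟨∑ q ∈ Q, e q, ?_, FineLE.sum fun q hq => (he q hq).2.1,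
    (chainSupp_sum_subset _ _).trans (biUnion_mono subset_rfl fun q hq => (he q hq).2.2)⟩
  rw [map_sum]
  exact Finset.sum_congr rfl fun q hq => (he q hq).1

section Parts
variable {α : Type*} {m : ℕ}

noncomputable def meetPart (B : Set α) (c : DChain α m) : DChain α m := by
  classical exact c.filter fun σ => ∃ t, σ t ∈ B

noncomputable def awayPart (B : Set α) (c : DChain α m) : DChain α m := by
  classical exact c.filter fun σ => ∀ t, σ t ∉ B

lemma support_meetPart_subset (B : Set α) (c : DChain α m) :
    (meetPart B c).support ⊆ c.support := by
  classical exact Finset.filter_subset _ _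

lemma support_awayPart_subset (B : Set α) (c : DChain α m) :
    (awayPart B c).support ⊆ c.support := by
  classical exact Finset.filter_subset _ _

lemma meetPart_add_awayPart (B : Set α) (c : DChain α m) : meetPart B c + awayPart B c = c := by
  ext σ
  by_cases h : ∃ t, σ t ∈ B
  · simp [meetPart, awayPart, h]
  · simp_all [meetPart, awayPart]

lemma disjoint_chainSupp_awayPart (B : Set α) (c : DChain α m) :
    Disjoint (chainSupp (awayPart B c)) B := by
  refine disjoint_left.2 fun x hx => ?_
  obtain ⟨σ, hσ, t, rfl⟩ := mem_chainSupp.1 hx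
  classical exact (Finset.mem_filter.1 hσ).2 t

lemma disjoint_chainSupp_dbd_meetPart {B : Set α} {c : DChain α (m + 1)}
    (h : Disjoint (chainSupp (dbd c)) B) : Disjoint (chainSupp (dbd (meetPart B c))) B := by
  have hsplit : dbd (meetPart B c) = dbd c - dbd (awayPart B c) := by
    rw [eq_sub_iff_add_eq, ← map_add, meetPart_add_awayPart]
  rw [hsplit]
  refine Disjoint.mono_left (chainSupp_sub_subset _ _) (disjoint_union_left.2 ⟨h, ?_⟩)
  exact (disjoint_chainSupp_awayPart B c).mono_left (chainSupp_dbd_subset _)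

lemma awayPart_add_sum_meetPart {ι : Type*} {B : ι → Set α} {Q : Finset ι} {c : DChain α m}
    (h : ∀ σ ∈ c.support, ∀ q ∈ Q, ∀ q' ∈ Q, (∃ t, σ t ∈ B q) → (∃ t, σ t ∈ B q') → q = q') :
    awayPart (⋃ q ∈ Q, B q) c + ∑ q ∈ Q, meetPart (B q) c = c := by
  ext σ
  simp only [Finsupp.add_apply, Finsupp.finsetSum_apply, awayPart, meetPart,
    Finsupp.filter_apply]
  by_cases hσ : σ ∈ c.support
  · by_cases hmeet : ∃ q ∈ Q, ∃ t, σ t ∈ B q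
    · obtain ⟨q, hq, t, ht⟩ := hmeet
      rw [if_neg fun hno => hno t (mem_iUnion₂.2 ⟨q, hq, ht⟩),
        Finset.sum_eq_single_of_mem q hq fun q' hq' hne =>
          if_neg fun h' => hne (h σ hσ q' hq' q hq h' ⟨t, ht⟩), if_pos ⟨t, ht⟩, zero_add]
    · rw [if_pos fun t ht => let ⟨q, hq, hqt⟩ := mem_iUnion₂.1 ht; hmeet ⟨q, hq, t, hqt⟩,
        Finset.sum_eq_zero fun q hq => if_neg fun ⟨t, ht⟩ => hmeet ⟨q, hq, t, ht⟩, add_zero]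
  · simp [Finsupp.notMem_support_iff.1 hσ]

end Parts

section Metric
variable {X : Type*} [PseudoMetricSpace X] {m : ℕ}

lemma subset_closedBall_add_of_diam_le {A : Set X} (hA : Bornology.IsBounded A) {δ s : ℝ}
    (hdiam : diam A ≤ δ) {q x : X} (hx : x ∈ A) (hxq : x ∈ closedBall q s) :
    A ⊆ closedBall q (s + δ) := fun y hy =>
  calc dist y q ≤ dist y x + dist x q := dist_triangle _ _ _
    _ ≤ δ + s := add_le_add ((dist_le_diam_of_mem hA hy hx).trans hdiam) hxq
    _ = s + δ := add_comm _ _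

lemma chainSupp_meetPart_closedBall_subset {δ s : ℝ} {q : X} {c : DChain X m}
    (hc : FineLE δ c) : chainSupp (meetPart (closedBall q s) c) ⊆ closedBall q (s + δ) := by
  intro x hx
  obtain ⟨σ, hσ, t, rfl⟩ := mem_chainSupp.1 hx
  classical
  obtain ⟨hσc, u, hu⟩ := Finset.mem_filter.1 hσ
  exact subset_closedBall_add_of_diam_le (finite_range σ).isBounded (hc σ hσc) ⟨u, rfl⟩ hu ⟨t, rfl⟩

lemma eq_of_meets_closedBall {Q : Set X} {s R : X → ℝ} {δ : ℝ}
    (hdisj : Q.PairwiseDisjoint fun q => closedBall q (R q)) (hR : ∀ q ∈ Q, s q + δ ≤ R q)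
    {σ : Fin m → X} (hσ : diam (range σ) ≤ δ) {q q' : X} (hq : q ∈ Q) (hq' : q' ∈ Q)
    (h : ∃ t, σ t ∈ closedBall q (s q)) (h' : ∃ t, σ t ∈ closedBall q' (s q')) : q = q' := by
  by_contra hne
  obtain ⟨t, ht⟩ := h
  obtain ⟨t', ht'⟩ := h'
  have hball : ∀ p ∈ Q, ∀ u, σ u ∈ closedBall p (s p) → range σ ⊆ closedBall p (R p) :=
    fun p hp u hu => (subset_closedBall_add_of_diam_le (finite_range σ).isBounded hσ ⟨u, rfl⟩
      hu).trans (closedBall_subset_closedBall (hR p hp))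
  exact disjoint_left.1 (hdisj hq hq' hne) (hball q hq t ht ⟨t, rfl⟩) (hball q' hq' t' ht' ⟨t, rfl⟩)

lemma notMem_closedBall_of_mem_annulus {K : ℝ} (hK : 1 ≤ K)
    {Q : Set X} {s : X → ℝ} (hdisj : Q.PairwiseDisjoint fun q => closedBall q (2 * K * s q))
    {q q' : X} (hq : q ∈ Q) (hq' : q' ∈ Q) (hs : 0 ≤ s q) {x : X}
    (hx : x ∈ closedBall q' (2 * K * s q') \ closedBall q' (s q' / K)) :
    x ∉ closedBall q (s q / K) := by
  obtain rfl | hne := eq_or_ne q' q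
  · exact hx.2
  refine fun hxq => disjoint_left.1 (hdisj hq' hq hne) hx.1 (closedBall_subset_closedBall ?_ hxq)
  calc s q / K ≤ s q := div_le_self hs hK
    _ ≤ 2 * K * s q := by nlinarith

end Metric

section Detour
variable {𝒮 : Type*} [MetricSpace 𝒮] {k : ℕ} {K : ℝ} {g : ℝ → ℝ} {P : Set 𝒮} {r : 𝒮 → ℝ}

lemma exists_filling_in_annulus (hF1 : FillAnnuli k K g P r) (hK : 0 < K) {p : 𝒮} (hp : p ∈ P)
    {j : ℕ} (hj : j < k) {s δ : ℝ} (hδ : 0 < δ) (hδs : δ ≤ s) (hsr : 2 * s ≤ r p / K)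
    {c : DChain 𝒮 (j + 2)} (hc : FineLE (g δ) c) (hin : chainSupp c ⊆ closedBall p (2 * s))
    (hout : Disjoint (chainSupp (dbd c)) (closedBall p s)) :
    ∃ e : DChain 𝒮 (j + 2), dbd e = dbd c ∧ FineLE δ e ∧
      chainSupp e ⊆ closedBall p (2 * K * s) \ closedBall p (s / K) ∧
      chainSupp e ⊆ cthickening (2 * K * √s) (chainSupp c) := by
  by_cases hc0 : dbd c = 0
  · exact ⟨0, by simp [hc0], FineLE.zero, by simp, by simp⟩
  have hsupp : chainSupp (dbd c) ⊆ chainSupp c := chainSupp_dbd_subset c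
  have hin' : ∀ x ∈ chainSupp (dbd c), dist p x ≤ 2 * s := fun x hx => by
    simpa [dist_comm] using hin (hsupp hx)
  obtain ⟨x₀, hx₀, hmin⟩ :=
    exists_min_image _ (dist p) (chainSupp_finite _) (chainSupp_nonempty hc0)
  have hx₀s : s < dist p x₀ := by
    simpa [dist_comm] using disjoint_left.1 hout hx₀
  -- a strict gap `s < r₁` is what keeps the filling off the closed ball of radius `s / K`
  obtain ⟨r₁, hsr₁, hr₁x₀⟩ := exists_between hx₀s
  have hann : chainSupp (dbd c) ⊆ annulus p r₁ (2 * s) := fun x hx =>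
    ⟨by linarith [hmin x hx], hin' x hx⟩
  have hdiam : diam (chainSupp (dbd c)) ≤ 4 * s := calc
    _ ≤ diam (closedBall p (2 * s)) :=
      diam_mono (fun x hx => hin (hsupp hx)) isBounded_closedBall
    _ ≤ 4 * s := by linarith [diam_closedBall (x := p) (by linarith : 0 ≤ 2 * s)]
  obtain ⟨e, hbd, hfine, hsuppe, hdiame⟩ := hF1 p hp δ hδ j hj r₁ (2 * s) (by linarith)
    (by linarith [hx₀s, hin' x₀ hx₀]) hsr (dbd c) (dbd_dbd c) hc.dbd hann
  have hx₀e : x₀ ∈ chainSupp e := chainSupp_dbd_subset e (hbd ▸ hx₀)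
  refine ⟨e, hbd, hfine, fun x hx => ⟨?_, ?_⟩, fun y hy => ?_⟩
  · rw [mem_closedBall, dist_comm]
    linarith [(hsuppe hx).2]
  · have hr₁ : s / K < r₁ / K := div_lt_div_of_pos_right hsr₁ hK
    simpa [dist_comm] using hr₁.trans_le (hsuppe hx).1
  refine mem_cthickening_of_dist_le y x₀ _ _ (hsupp hx₀) ?_
  calc dist y x₀ ≤ diam (chainSupp e) :=
        dist_le_diam_of_mem (chainSupp_finite e).isBounded hy hx₀e
    _ ≤ K * √(4 * s) := hdiame.trans (by gcongr)
    _ = 2 * K * √s := by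
      rw [Real.sqrt_mul' _ (by linarith), show (4 : ℝ) = 2 ^ 2 by norm_num,
        Real.sqrt_sq zero_le_two]
      ring

theorem exists_detour (hF1 : FillAnnuli k K g P r) (hK : 1 ≤ K) {j : ℕ} (hj : j < k)
    {δ : ℝ} (hδ : 0 < δ) (hgδ : g δ ≤ δ) {Q : Finset 𝒮} (hQP : ↑Q ⊆ P) {s : 𝒮 → ℝ}
    (hδs : ∀ q ∈ Q, δ ≤ s q) (hsr : ∀ q ∈ Q, 2 * K * s q ≤ r q / K)
    (hdisj : (Q : Set 𝒮).PairwiseDisjoint fun q => closedBall q (2 * K * s q))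
    {S : ℝ} (hS : ∀ q ∈ Q, s q ≤ S) {d : DChain 𝒮 (j + 2)} (hd : FineLE (g δ) d)
    (hbd : ∀ q ∈ Q, ∀ x ∈ chainSupp (dbd d), x ∉ closedBall q (s q)) :
    ∃ d' : DChain 𝒮 (j + 2), ∃ D : 𝒮 → DChain 𝒮 (j + 2),
      FineLE δ d' ∧ dbd d' = dbd d ∧
      (∀ q ∈ Q, ∀ x ∈ chainSupp d', x ∉ closedBall q (s q / K)) ∧
      chainSupp d' ⊆ cthickening (2 * K * √S) (chainSupp d) ∧
      d - d' = ∑ q ∈ Q, D q ∧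
      ∀ q ∈ Q, dbd (D q) = 0 ∧ FineLE δ (D q) ∧ chainSupp (D q) ⊆ closedBall q (2 * K * s q) := by
  set B : 𝒮 → Set 𝒮 := fun q => closedBall q (s q)
  have hs0 : ∀ q ∈ Q, 0 ≤ s q := fun q hq => hδ.le.trans (hδs q hq)
  have hmeet_fine : ∀ q, FineLE (g δ) (meetPart (B q) d) :=
    fun q => hd.anti (support_meetPart_subset _ _)
  have hmeet_supp : ∀ q ∈ Q, chainSupp (meetPart (B q) d) ⊆ closedBall q (2 * s q) :=
    fun q hq => (chainSupp_meetPart_closedBall_subset hd).trans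
      (closedBall_subset_closedBall (by linarith [hδs q hq]))
  have hE : ∀ q ∈ Q, ∃ e, dbd e = dbd (meetPart (B q) d) ∧ FineLE δ e ∧
      chainSupp e ⊆ closedBall q (2 * K * s q) \ closedBall q (s q / K) ∧
      chainSupp e ⊆ cthickening (2 * K * √(s q)) (chainSupp (meetPart (B q) d)) :=
    fun q hq => exists_filling_in_annulus hF1 (by linarith) (hQP hq) hj hδ (hδs q hq)
      (le_trans (by nlinarith [hs0 q hq]) (hsr q hq)) (hmeet_fine q) (hmeet_supp q hq)
      (disjoint_chainSupp_dbd_meetPart (disjoint_left.2 (hbd q hq)))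
  choose! E hE using hE
  have hdecomp : awayPart (⋃ q ∈ Q, B q) d + ∑ q ∈ Q, meetPart (B q) d = d :=
    awayPart_add_sum_meetPart fun σ hσ q hq q' hq' => eq_of_meets_closedBall hdisj
      (fun q hq => by nlinarith [hs0 q hq, hδs q hq]) ((hd σ hσ).trans hgδ) hq hq'
  refine ⟨awayPart (⋃ q ∈ Q, B q) d + ∑ q ∈ Q, E q, fun q => meetPart (B q) d - E q,
    ((hd.anti (support_awayPart_subset _ _)).mono hgδ).add (FineLE.sum fun q hq => (hE q hq).2.1),
    ?_, fun q hq x hx => ?_, ?_, ?_,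
    fun q hq => ⟨?_, ((hmeet_fine q).mono hgδ).sub (hE q hq).2.1, ?_⟩⟩
  · conv_rhs => rw [← hdecomp]
    simp only [map_add, map_sum]
    rw [Finset.sum_congr rfl fun q hq => (hE q hq).1]
  · rcases chainSupp_add_sum_subset _ _ _ hx with hx | hx
    · refine fun hxq => disjoint_left.1 (disjoint_chainSupp_awayPart _ d) hx
        (mem_iUnion₂.2 ⟨q, hq, ?_⟩)
      exact closedBall_subset_closedBall (div_le_self (hs0 q hq) hK) hxq
    · obtain ⟨q', hq', hx⟩ := mem_iUnion₂.1 hx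
      exact notMem_closedBall_of_mem_annulus hK hdisj hq hq' (hs0 q hq) ((hE q' hq').2.2.1 hx)
  · refine (chainSupp_add_sum_subset _ _ _).trans (union_subset ?_ (iUnion₂_subset fun q hq => ?_))
    · exact (chainSupp_mono (support_awayPart_subset _ _)).trans (self_subset_cthickening _)
    · refine (hE q hq).2.2.2.trans ((cthickening_mono ?_ _).trans
        (cthickening_subset_of_subset _ (chainSupp_mono (support_meetPart_subset _ _))))
      gcongr
      exact hS q hq
  · nth_rw 1 [← hdecomp]
    rw [Finset.sum_sub_distrib]
    abel
  · rw [map_sub, (hE q hq).1, sub_self]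
  · refine (chainSupp_sub_subset _ _).trans (union_subset ((hmeet_supp q hq).trans
      (closedBall_subset_closedBall ?_)) fun x hx => ((hE q hq).2.2.1 hx).1)
    nlinarith [hs0 q hq]

end Detour

lemma two_mul_mul_div_le_div {K N M r : ℝ} (hK : 0 < K) (hN : 1 ≤ N) (hM : 2 * K ^ 2 ≤ M)
    (hr : 0 ≤ r) : 2 * K * (r / (N * M)) ≤ r / K := by
  have hNM : 2 * K ^ 2 ≤ N * M := by nlinarith
  calc 2 * K * (r / (N * M)) ≤ 2 * K * (r / (2 * K ^ 2)) := by gcongr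
    _ = r / K := by field_simp

theorem detour_disjoint_balls_general {𝒮 : Type*} [MetricSpace 𝒮]
    (k : ℕ) (K : ℝ) (hK : 9 ≤ K)
    (g : ℝ → ℝ) (hg : ∀ δ : ℝ, 0 < δ → 0 < g δ ∧ g δ ≤ δ)
    (P : Set 𝒮) (r : 𝒮 → ℝ) (hr : ∀ p ∈ P, 0 < r p)
    (M : ℝ) (hM : 2 * K ^ 2 ≤ M)
    (hF1 : FillAnnuli k K g P r) (hF2 : FillBalls k K g P r)
    (N : ℝ) (hN : 1 ≤ N)
    (Q : Finset 𝒮) (hQP : ↑Q ⊆ P) (hQne : Q.Nonempty)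
    (hdisj : ∀ q ∈ Q, ∀ q' ∈ Q, q ≠ q' →
      Disjoint (Metric.closedBall q (2 * K * (r q / (N * M))))
        (Metric.closedBall q' (2 * K * (r q' / (N * M)))))
    (i : ℕ) (hi1 : 1 ≤ i) (hik : i ≤ k)
    (δ : ℝ) (hδ0 : 0 < δ) (hδmin : δ ≤ Q.inf' hQne (fun q => r q / (N * M)))
    (d : DChain 𝒮 (i + 1)) (hdfine : FineLE (g δ) d)
    (hbd : ∀ q ∈ Q, ∀ x ∈ chainSupp (dbd d), x ∉ Metric.closedBall q (r q / (N * M))) :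
    ∃ d' : DChain 𝒮 (i + 1),
      FineLE δ d' ∧ dbd d' = dbd d ∧
      (∀ q ∈ Q, ∀ x ∈ chainSupp d', x ∉ Metric.closedBall q ((r q / (N * M)) / K)) ∧
      chainSupp (d - d') ⊆ (⋃ q ∈ Q, Metric.closedBall q (2 * K * (r q / (N * M)))) ∧
      Metric.diam (chainSupp d') ≤ Metric.diam (chainSupp d)
        + 4 * K * Real.sqrt (Q.sup' hQne (fun q => r q / (N * M))) ∧
      (FineLE (g (g δ)) d →
        ∃ e : DChain 𝒮 (i + 2), dbd e = d - d' ∧ FineLE δ e ∧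
          chainSupp e ⊆ ⋃ q ∈ Q, Metric.closedBall q (2 * K ^ 2 * (r q / (N * M)))) := by
  obtain ⟨j, rfl⟩ : ∃ j, i = j + 1 := ⟨i - 1, by omega⟩
  have hsr : ∀ q ∈ Q, 2 * K * (r q / (N * M)) ≤ r q / K := fun q hq =>
    two_mul_mul_div_le_div (by linarith) hN hM (hr q (hQP hq)).le
  have hδs : ∀ q ∈ Q, δ ≤ r q / (N * M) := fun q hq => hδmin.trans (Finset.inf'_le _ hq)
  -- for (5) the detour is built at scale `g δ`, so that the cycles `d_q - e_q` are `g δ`-fine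
  obtain ⟨δ₀, hδ₀, hδ₀δ, hd₀, hδ₀eq⟩ : ∃ δ₀, 0 < δ₀ ∧ δ₀ ≤ δ ∧ FineLE (g δ₀) d ∧
      (FineLE (g (g δ)) d → δ₀ = g δ) := by
    by_cases h5 : FineLE (g (g δ)) d
    · exact ⟨g δ, (hg δ hδ0).1, (hg δ hδ0).2, h5, fun _ => rfl⟩
    · exact ⟨δ, hδ0, le_rfl, hdfine, fun h => absurd h h5⟩
  obtain ⟨d', D, hfine, hbd', havoid, hthick, hdiff, hD⟩ :=
    exists_detour hF1 (by linarith) (by omega) hδ₀ (hg δ₀ hδ₀).2 hQP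
      (fun q hq => hδ₀δ.trans (hδs q hq)) hsr hdisj (S := Q.sup' hQne fun q => r q / (N * M))
      (fun q hq => Finset.le_sup' (fun q => r q / (N * M)) hq) hd₀ hbd
  refine ⟨d', hfine.mono hδ₀δ, hbd', havoid, ?_, ?_, fun h5 => ?_⟩
  · rw [hdiff]
    exact (chainSupp_sum_subset _ _).trans (biUnion_mono subset_rfl fun q hq => (hD q hq).2.2)
  · calc diam (chainSupp d') ≤ diam (cthickening _ (chainSupp d)) :=
          diam_mono hthick (chainSupp_finite d).isBounded.cthickening
      _ ≤ _ := diam_cthickening_le _ (by positivity)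
      _ = _ := by ring
  · rw [hdiff]
    refine exists_dbd_eq_sum fun q hq => ?_
    obtain ⟨hcyc, hDfine, hDsupp⟩ := hD q hq
    obtain ⟨e, he, hefine, hesupp, -⟩ := hF2 q (hQP hq) δ hδ0 (j + 1) hik _
      (by nlinarith [hδs q hq]) (hsr q hq) (D q) hcyc (hδ₀eq h5 ▸ hDfine) hDsupp
    exact ⟨e, he, hefine, hesupp.trans (closedBall_subset_closedBall (le_of_eq (by ring)))⟩

/-- detouring around disjoint balls.  In the ball-system setup with the
filling hypotheses (F1), (F2): given `N ≥ 1` and a nonempty finite family `𝔹 ⊆ (1/N)𝔅` of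
balls `B(q, r_q/(N·M))`, `q ∈ Q`, whose `2K`-rescalings are pairwise disjoint, any
`g(δ)`-fine discrete `i`-chain `d` (`1 ≤ i ≤ k`, `0 < δ ≤ 𝔯_min(𝔹)`) with `supp(∂d)`
disjoint from every ball of `𝔹` admits a discrete `i`-chain `d'` with:
(1) `d'` is `δ`-fine and `∂d' = ∂d`;
(2) `supp(d')` is disjoint from every ball of `(1/K)𝔹`;
(3) `supp(d - d')` is contained in the union of the balls of `2K𝔹`;
(4) `diam(d') ≤ diam(d) + 4K·√(𝔯_max(𝔹))`;
(5) if moreover `d` is `g(g(δ))`-fine, then `d - d' = ∂e` for a `δ`-fine `(i+1)`-chain `e`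
supported in the union of the balls of `2K²𝔹`. -/
theorem detour_disjoint_balls {𝒮 : Type*} [MetricSpace 𝒮]
    (k : ℕ) (hk : 1 ≤ k) (K : ℝ) (hK : 9 ≤ K)
    (g : ℝ → ℝ) (hg : ∀ δ : ℝ, 0 < δ → 0 < g δ ∧ g δ ≤ δ)
    (P : Set 𝒮) (r : 𝒮 → ℝ) (hr : ∀ p ∈ P, 0 < r p)
    (M : ℝ) (hM : 2 * K ^ 2 ≤ M)
    (hF1 : FillAnnuli k K g P r) (hF2 : FillBalls k K g P r)
    (N : ℝ) (hN : 1 ≤ N)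
    (Q : Finset 𝒮) (hQP : ↑Q ⊆ P) (hQne : Q.Nonempty)
    (hdisj : ∀ q ∈ Q, ∀ q' ∈ Q, q ≠ q' →
      Disjoint (Metric.closedBall q (2 * K * (r q / (N * M))))
        (Metric.closedBall q' (2 * K * (r q' / (N * M)))))
    (i : ℕ) (hi1 : 1 ≤ i) (hik : i ≤ k)
    (δ : ℝ) (hδ0 : 0 < δ) (hδmin : δ ≤ Q.inf' hQne (fun q => r q / (N * M)))
    (d : DChain 𝒮 (i + 1)) (hdfine : FineLE (g δ) d)
    (hbd : ∀ q ∈ Q, ∀ x ∈ chainSupp (dbd d), x ∉ Metric.closedBall q (r q / (N * M))) :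
    ∃ d' : DChain 𝒮 (i + 1),
      FineLE δ d' ∧ dbd d' = dbd d ∧
      (∀ q ∈ Q, ∀ x ∈ chainSupp d', x ∉ Metric.closedBall q ((r q / (N * M)) / K)) ∧
      chainSupp (d - d') ⊆ (⋃ q ∈ Q, Metric.closedBall q (2 * K * (r q / (N * M)))) ∧
      Metric.diam (chainSupp d') ≤ Metric.diam (chainSupp d)
        + 4 * K * Real.sqrt (Q.sup' hQne (fun q => r q / (N * M))) ∧
      (FineLE (g (g δ)) d →
        ∃ e : DChain 𝒮 (i + 2), dbd e = d - d' ∧ FineLE δ e ∧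
          chainSupp e ⊆ ⋃ q ∈ Q, Metric.closedBall q (2 * K ^ 2 * (r q / (N * M)))) :=
  detour_disjoint_balls_general k K hK g hg P r hr M hM hF1 hF2 N hN Q hQP hQne hdisj i hi1 hik δ
    hδ0 hδmin d hdfine hbd
end
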